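/- arXiv:1412.3068 — 7 statements merged into one kernel-verified Lean document; each statement's English description precedes it below -/
import Mathlib

section
/- Let X be a finite set with at least two elements and let 𝒜 be a set-arrangement on X that contains every two-element subset of X which is not a proper subset of any member of 𝒜. Then the collection ℐ consisting of all subsets of X with at most two elements together with all three-element subsets of X that are not contained in any member of 𝒜 is the family of independent sets of a (simple) matroid on X. -/
/-!
The only nontrivial augmentation is from a pair `I` to a triple `J` lying in no block of `𝒜`.
By the hypothesis on pairs, `I` lies in some block `A`, and in no other one since two blocks meet
in at most one point. As `J ⊄ A`, any `e ∈ J \ A` gives a triple `insert e I` inside no block.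
-/

/-- A set-arrangement on `X`: every member has at least two elements, two distinct members
meet in at most one element, and the union of all members is `X`. -/
def IsSetArrangement {X : Type*} (𝒜 : Set (Set X)) : Prop :=
  (∀ A ∈ 𝒜, 2 ≤ A.ncard) ∧
    (∀ A ∈ 𝒜, ∀ B ∈ 𝒜, A ≠ B → (A ∩ B).Subsingleton) ∧
    ⋃₀ 𝒜 = Set.univ

section

variable {X : Type*} {𝒜 : Set (Set X)}

theorem IsSetArrangement.eq_of_subset_of_ncard_eq_two (h𝒜 : IsSetArrangement 𝒜) {P A B : Set X}
    (hP : P.ncard = 2) (hA : A ∈ 𝒜) (hB : B ∈ 𝒜) (hPA : P ⊆ A) (hPB : P ⊆ B) : A = B := by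
  by_contra hAB
  have hnontriv : P.Nontrivial := Set.one_lt_ncard_iff_nontrivial_and_finite.mp (by omega) |>.1
  exact hnontriv.not_subsingleton ((h𝒜.2.1 A hA B hB hAB).anti (Set.subset_inter hPA hPB))

theorem exists_mem_superset_of_ncard_eq_two
    (hpairs : ∀ P : Set X, P.ncard = 2 → (∀ A ∈ 𝒜, ¬P ⊂ A) → P ∈ 𝒜) {P : Set X}
    (hP : P.ncard = 2) : ∃ A ∈ 𝒜, P ⊆ A := by
  by_contra! hnot
  exact hnot P (hpairs P hP fun A hA hPA => hnot A hA hPA.subset) subset_rfl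

def ArrangementIndep (𝒜 : Set (Set X)) (I : Set X) : Prop :=
  I.ncard ≤ 2 ∨ (I.ncard = 3 ∧ ∀ A ∈ 𝒜, ¬I ⊆ A)

namespace ArrangementIndep

theorem empty (𝒜 : Set (Set X)) : ArrangementIndep 𝒜 ∅ :=
  Or.inl (by simp)

variable [Finite X]

theorem subset {I J : Set X} (hJ : ArrangementIndep 𝒜 J) (hIJ : I ⊆ J) :
    ArrangementIndep 𝒜 I := by
  have hle := Set.ncard_le_ncard hIJ
  rcases hJ with hJ2 | ⟨hJ3, hJ𝒜⟩
  · exact Or.inl (hle.trans hJ2)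
  · rcases le_or_gt I.ncard 2 with hI2 | hI3
    · exact Or.inl hI2
    · have hIJ_eq : I = J := Set.eq_of_subset_of_ncard_le hIJ (by omega)
      exact Or.inr ⟨by omega, hIJ_eq ▸ hJ𝒜⟩

theorem exists_insert_of_ncard_lt (h𝒜 : IsSetArrangement 𝒜)
    (hpairs : ∀ P : Set X, P.ncard = 2 → (∀ A ∈ 𝒜, ¬P ⊂ A) → P ∈ 𝒜) {I J : Set X}
    (hI : ArrangementIndep 𝒜 I) (hJ : ArrangementIndep 𝒜 J) (hIJ : I.ncard < J.ncard) :
    ∃ e ∈ J, e ∉ I ∧ ArrangementIndep 𝒜 (insert e I) := by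
  rcases le_or_gt I.ncard 1 with hI1 | hI2
  · obtain ⟨e, heJ, heI⟩ := Set.exists_mem_notMem_of_ncard_lt_ncard hIJ
    exact ⟨e, heJ, heI, Or.inl ((Set.ncard_insert_le e I).trans (by omega))⟩
  obtain ⟨hJ3, hJ𝒜⟩ : J.ncard = 3 ∧ ∀ A ∈ 𝒜, ¬J ⊆ A := by
    rcases hJ with hJ | hJ
    · omega
    · exact hJ
  have hI2 : I.ncard = 2 := by rcases hI with hI | hI <;> omega
  obtain ⟨A, hA, hIA⟩ := exists_mem_superset_of_ncard_eq_two hpairs hI2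
  obtain ⟨e, heJ, heA⟩ := Set.not_subset.mp (hJ𝒜 A hA)
  have heI : e ∉ I := fun heI => heA (hIA heI)
  refine ⟨e, heJ, heI, Or.inr ⟨by rw [Set.ncard_insert_of_notMem heI, hI2], fun B hB heIB => ?_⟩⟩
  have hAB : A = B := h𝒜.eq_of_subset_of_ncard_eq_two hI2 hA hB hIA
    ((Set.subset_insert e I).trans heIB)
  exact heA (hAB ▸ heIB (Set.mem_insert e I))

end ArrangementIndep

end

theorem statement0_general {X : Type*} [Fintype X] (𝒜 : Set (Set X))
    (h𝒜 : IsSetArrangement 𝒜)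
    (hpairs : ∀ P : Set X, P.ncard = 2 → (∀ A ∈ 𝒜, ¬P ⊂ A) → P ∈ 𝒜) :
    ∃ M : Matroid X, M.E = Set.univ ∧
      ∀ I : Set X, M.Indep I ↔ (I.ncard ≤ 2 ∨ (I.ncard = 3 ∧ ∀ A ∈ 𝒜, ¬I ⊆ A)) :=
  ⟨(IndepMatroid.ofFinite Set.finite_univ (ArrangementIndep 𝒜) (ArrangementIndep.empty 𝒜)
      (fun _ _ => ArrangementIndep.subset)
      (fun _ _ => ArrangementIndep.exists_insert_of_ncard_lt h𝒜 hpairs)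
      (fun I _ => Set.subset_univ I)).matroid, rfl, fun _ => Iff.rfl⟩

/-- If `𝒜` is a set-arrangement on a finite set `X` with at least two elements, containing
every two-element subset of `X` which is not a proper subset of a member of `𝒜`, then the
collection of all subsets of `X` with at most two elements, together with all three-element
subsets of `X` not contained in any member of `𝒜`, is the family of independent sets of a
matroid on `X`. -/
theorem statement0 {X : Type*} [Fintype X] [Nontrivial X] (𝒜 : Set (Set X))
    (h𝒜 : IsSetArrangement 𝒜)
    (hpairs : ∀ P : Set X, P.ncard = 2 → (∀ A ∈ 𝒜, ¬P ⊂ A) → P ∈ 𝒜) :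
    ∃ M : Matroid X, M.E = Set.univ ∧
      ∀ I : Set X, M.Indep I ↔ (I.ncard ≤ 2 ∨ (I.ncard = 3 ∧ ∀ A ∈ 𝒜, ¬I ⊆ A)) :=
  statement0_general 𝒜 h𝒜 hpairs
end

section
/- Let X be a finite set with at least two elements and let 𝒜 be a set-arrangement on X that contains every two-element subset of X which is not a proper subset of any member of 𝒜. Let ℳ be the matroid on X whose independent sets are all subsets of X with at most two elements together with all three-element subsets of X not contained in any member of 𝒜. Then 𝒜 is exactly the set of 2-flats of ℳ, i.e., the flats of ℳ of rank 2. -/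
section

variable {X : Type*} {𝒜 : Set (Set X)} {A B S F : Set X} {a b x : X}

def TriplesCovered (𝒜 : Set (Set X)) (S : Set X) : Prop :=
  ∀ T ⊆ S, T.ncard = 3 → ∃ A ∈ 𝒜, T ⊆ A

theorem triplesCovered_of_mem (hA : A ∈ 𝒜) : TriplesCovered 𝒜 A :=
  fun _ hT _ => ⟨A, hA, hT⟩

theorem Matroid.not_exists_indep_triple_iff (M : Matroid X)
    (hIndep : ∀ T : Set X, T.ncard = 3 → (M.Indep T ↔ ∀ A ∈ 𝒜, ¬T ⊆ A)) :
    (¬∃ T ⊆ S, T.ncard = 3 ∧ M.Indep T) ↔ TriplesCovered 𝒜 S := by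
  simp only [TriplesCovered, not_exists, not_and]
  refine forall₂_congr fun T _ => forall_congr' fun hT => ?_
  simp [hIndep T hT]

namespace IsSetArrangement

variable (h𝒜 : IsSetArrangement 𝒜)
include h𝒜

theorem mem_of_pair_subset_of_triple_subset (hA : A ∈ 𝒜) (hB : B ∈ 𝒜) (hab : a ≠ b)
    (ha : a ∈ A) (hb : b ∈ A) (habx : {a, b, x} ⊆ B) : x ∈ A := by
  obtain rfl : A = B := by
    by_contra hAB
    exact hab (h𝒜.2.1 A hA B hB hAB ⟨ha, habx (by simp)⟩ ⟨hb, habx (by simp)⟩)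
  exact habx (by simp)

theorem subset_of_triplesCovered (hA : A ∈ 𝒜) (hab : a ≠ b) (ha : a ∈ A) (hb : b ∈ A)
    (hS : TriplesCovered 𝒜 S) (haS : a ∈ S) (hbS : b ∈ S) : S ⊆ A := by
  intro x hx
  by_cases hxa : x = a
  · exact hxa ▸ ha
  by_cases hxb : x = b
  · exact hxb ▸ hb
  have hcard : ({a, b, x} : Set X).ncard = 3 :=
    Set.ncard_eq_three.2 ⟨a, b, x, hab, Ne.symm hxa, Ne.symm hxb, rfl⟩
  obtain ⟨B, hB, habx⟩ := hS {a, b, x} (Set.insert_subset haS (Set.pair_subset hbS hx)) hcard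
  exact h𝒜.mem_of_pair_subset_of_triple_subset hA hB hab ha hb habx

theorem exists_subset_of_triplesCovered (hS : TriplesCovered 𝒜 S) (hab : a ≠ b) (hax : a ≠ x)
    (hbx : b ≠ x) (ha : a ∈ S) (hb : b ∈ S) (hx : x ∈ S) : ∃ A ∈ 𝒜, S ⊆ A := by
  obtain ⟨A, hA, habx⟩ := hS {a, b, x} (Set.insert_subset ha (Set.pair_subset hb hx))
    (Set.ncard_eq_three.2 ⟨a, b, x, hab, hax, hbx, rfl⟩)
  exact ⟨A, hA, h𝒜.subset_of_triplesCovered hA hab (habx (by simp)) (habx (by simp)) hS ha hb⟩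

theorem exists_subset_of_subsingleton [Nonempty X] (hS : S.Subsingleton) :
    ∃ A ∈ 𝒜, S ⊆ A := by
  obtain ⟨p, hSp⟩ : ∃ p, S ⊆ {p} := by
    rcases hS.eq_empty_or_singleton with rfl | ⟨p, rfl⟩
    · exact ⟨Classical.arbitrary X, Set.empty_subset _⟩
    · exact ⟨p, subset_rfl⟩
  obtain ⟨A, hA, hpA⟩ := Set.mem_sUnion.1 (h𝒜.2.2 ▸ Set.mem_univ p)
  exact ⟨A, hA, hSp.trans (Set.singleton_subset_iff.2 hpA)⟩

theorem maximal_triplesCovered_of_mem (hA : A ∈ 𝒜) : Maximal (TriplesCovered 𝒜) A := by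
  obtain ⟨hnontriv, -⟩ := Set.one_lt_ncard_iff_nontrivial_and_finite.1 (h𝒜.1 A hA)
  obtain ⟨a, ha, b, hb, hab⟩ := hnontriv
  exact ⟨triplesCovered_of_mem hA, fun S hS hAS =>
    h𝒜.subset_of_triplesCovered hA hab ha hb hS (hAS ha) (hAS hb)⟩

theorem mem_of_maximal_triplesCovered [Nonempty X]
    (hpairs : ∀ P : Set X, P.ncard = 2 → (∀ A ∈ 𝒜, ¬P ⊂ A) → P ∈ 𝒜)
    (hF : Maximal (TriplesCovered 𝒜) F) : F ∈ 𝒜 := by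
  by_cases hsub : ∃ A ∈ 𝒜, F ⊆ A
  · obtain ⟨A, hA, hFA⟩ := hsub
    exact hF.eq_of_subset (triplesCovered_of_mem hA) hFA ▸ hA
  obtain ⟨a, ha, b, hb, hab⟩ : F.Nontrivial := by
    by_contra hF1
    exact hsub (h𝒜.exists_subset_of_subsingleton (Set.not_nontrivial_iff.1 hF1))
  have hFab : F = {a, b} := by
    refine Set.Subset.antisymm (fun x hx => ?_) (Set.pair_subset ha hb)
    by_contra hx'
    simp only [Set.mem_insert_iff, Set.mem_singleton_iff, not_or] at hx'
    exact hsub (h𝒜.exists_subset_of_triplesCovered hF.prop hab (Ne.symm hx'.1) (Ne.symm hx'.2)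
      ha hb hx)
  refine hpairs F (hFab ▸ Set.ncard_pair hab) fun A hA hFA => ?_
  exact hsub ⟨A, hA, hFA.subset⟩

end IsSetArrangement

end

theorem statement1_general {X : Type*} [Nontrivial X] (𝒜 : Set (Set X))
    (h𝒜 : IsSetArrangement 𝒜)
    (hpairs : ∀ P : Set X, P.ncard = 2 → (∀ A ∈ 𝒜, ¬P ⊂ A) → P ∈ 𝒜)
    (M : Matroid X)
    (hIndep : ∀ I : Set X, M.Indep I ↔ (I.ncard ≤ 2 ∨ (I.ncard = 3 ∧ ∀ A ∈ 𝒜, ¬I ⊆ A))) :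
    𝒜 = {F : Set X | Maximal (fun S : Set X => ¬∃ T ⊆ S, T.ncard = 3 ∧ M.Indep T) F} := by
  have hIndep3 : ∀ T : Set X, T.ncard = 3 → (M.Indep T ↔ ∀ A ∈ 𝒜, ¬T ⊆ A) := fun T hT => by
    simp [hIndep, hT]
  have hcovered : (fun S : Set X => ¬∃ T ⊆ S, T.ncard = 3 ∧ M.Indep T) = TriplesCovered 𝒜 :=
    funext fun _ => propext (M.not_exists_indep_triple_iff hIndep3)
  rw [hcovered]
  ext F
  exact ⟨h𝒜.maximal_triplesCovered_of_mem, h𝒜.mem_of_maximal_triplesCovered hpairs⟩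

/-- If `𝒜` is a set-arrangement on a finite set `X` with at least two elements, containing
every two-element subset of `X` which is not a proper subset of a member of `𝒜`, and `M` is
the matroid on `X` whose independent sets are the subsets of `X` with at most two elements
together with the three-element subsets not contained in any member of `𝒜`, then `𝒜` is
exactly the set of 2-flats of `M`, i.e. the maximal sets containing no independent
three-element subset. -/
theorem statement1 {X : Type*} [Fintype X] [Nontrivial X] (𝒜 : Set (Set X))
    (h𝒜 : IsSetArrangement 𝒜)
    (hpairs : ∀ P : Set X, P.ncard = 2 → (∀ A ∈ 𝒜, ¬P ⊂ A) → P ∈ 𝒜)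
    (M : Matroid X) (hE : M.E = Set.univ)
    (hIndep : ∀ I : Set X, M.Indep I ↔ (I.ncard ≤ 2 ∨ (I.ncard = 3 ∧ ∀ A ∈ 𝒜, ¬I ⊆ A))) :
    𝒜 = {F : Set X | Maximal (fun S : Set X => ¬∃ T ⊆ S, T.ncard = 3 ∧ M.Indep T) F} :=
  statement1_general 𝒜 h𝒜 hpairs M hIndep
end

section
/- Let L be a Lie algebra of a set-arrangement 𝒜 on X and let A ∈ 𝒜. The Lie algebra morphism from the free Lie algebra F(X) to the localized Lie algebra L_A = F(A)/⟨R_A⟩ that sends each generator in A to its class and every generator not in A to zero annihilates the defining ideal of L; hence it induces a Lie algebra morphism π_A : L → L_A satisfying π_A ∘ s_A = id_{L_A}, where s_A : L_A → L is the natural morphism induced by the inclusion A ⊆ X. -/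
open FreeLieAlgebra

variable (C : Type*) [CommRing C] {X : Type*}

/-- The inclusion `F(A) → F(X)` of free Lie algebras. -/
noncomputable def inclX (A : Set X) : FreeLieAlgebra C A →ₗ⁅C⁆ FreeLieAlgebra C X :=
  FreeLieAlgebra.lift C fun a => FreeLieAlgebra.of C (a : X)

/-- The inclusion `F(A) → F(S)` of free Lie algebras along `A ⊆ S`. -/
noncomputable def inclSub {A S : Set X} (h : A ⊆ S) :
    FreeLieAlgebra C A →ₗ⁅C⁆ FreeLieAlgebra C S :=
  FreeLieAlgebra.lift C fun a => FreeLieAlgebra.of C (⟨a.1, h a.2⟩ : S)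

/-- Admissibility of the relations: `R_A ⊆ [F(A), F(A)]`. -/
def AdmissibleRel (𝒜 : Set (Set X)) (Rel : ∀ A : Set X, Set (FreeLieAlgebra C A)) : Prop :=
  ∀ A ∈ 𝒜, Rel A ⊆ (LieAlgebra.derivedSeries C (FreeLieAlgebra C A) 1 : Set (FreeLieAlgebra C A))

/-- The defining ideal of a Lie algebra of a set-arrangement: generated by all `⁅x,y⁆` for
pairs not contained in any member of `𝒜`, together with the relations `R_A`, `A ∈ 𝒜`. -/
noncomputable def definingIdeal (𝒜 : Set (Set X)) (Rel : ∀ A : Set X, Set (FreeLieAlgebra C A)) :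
    LieIdeal C (FreeLieAlgebra C X) :=
  LieSubmodule.lieSpan C (FreeLieAlgebra C X)
    ({z | ∃ x y : X, (∀ A ∈ 𝒜, ¬({x, y} : Set X) ⊆ A) ∧ z = ⁅of C x, of C y⁆} ∪
      ⋃ A, ⋃ (_ : A ∈ 𝒜), inclX C A '' Rel A)

/-- The Lie algebra `L` of the set-arrangement `𝒜` with relations `Rel`. -/
noncomputable abbrev ArrLie (𝒜 : Set (Set X)) (Rel : ∀ A : Set X, Set (FreeLieAlgebra C A)) :=
  FreeLieAlgebra C X ⧸ definingIdeal C 𝒜 Rel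

/-- The quotient map `F(X) → L`. -/
noncomputable def arrMk (𝒜 : Set (Set X)) (Rel : ∀ A : Set X, Set (FreeLieAlgebra C A)) :
    FreeLieAlgebra C X → ArrLie C 𝒜 Rel :=
  LieSubmodule.Quotient.mk (N := definingIdeal C 𝒜 Rel)

/-- The ideal `⟨R_A⟩` of `F(A)`. -/
noncomputable def locIdeal (A : Set X) (Rel : ∀ A : Set X, Set (FreeLieAlgebra C A)) :
    LieIdeal C (FreeLieAlgebra C A) :=
  LieSubmodule.lieSpan C (FreeLieAlgebra C A) (Rel A)

/-- The localized Lie algebra `L_A = F(A)/⟨R_A⟩`. -/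
noncomputable abbrev LocLie (A : Set X) (Rel : ∀ A : Set X, Set (FreeLieAlgebra C A)) :=
  FreeLieAlgebra C A ⧸ locIdeal C A Rel

/-- The quotient map `F(A) → L_A`. -/
noncomputable def locMk (A : Set X) (Rel : ∀ A : Set X, Set (FreeLieAlgebra C A)) :
    FreeLieAlgebra C A → LocLie C A Rel :=
  LieSubmodule.Quotient.mk (N := locIdeal C A Rel)

open Classical in
/-- The canonical Lie algebra map `F(X) → L_A` killing the generators outside `A`. -/
noncomputable def locProj (A : Set X) (Rel : ∀ A : Set X, Set (FreeLieAlgebra C A)) :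
    FreeLieAlgebra C X →ₗ⁅C⁆ LocLie C A Rel :=
  FreeLieAlgebra.lift C fun x : X =>
    if h : x ∈ A then locMk C A Rel (of C (⟨x, h⟩ : A)) else 0

/-- The replacement condition. -/
def ReplacementCond (𝒜 : Set (Set X)) (Rel : ∀ A : Set X, Set (FreeLieAlgebra C A)) : Prop :=
  ∀ A ∈ 𝒜, 3 ≤ A.ncard → ∀ x ∈ A, (∃ B ∈ 𝒜, B ≠ A ∧ x ∈ B) →
    (LieAlgebra.derivedSeries C (LocLie C A Rel) 1 : Set (LocLie C A Rel)) ⊆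
      (LieSubalgebra.lieSpan C (LocLie C A Rel)
        {z | ∃ a : A, (a : X) ≠ x ∧ z = locMk C A Rel (of C a)} : Set (LocLie C A Rel))

/-- Lie monomials of weight `n` with respect to a weighting `d` of the generators. -/
inductive IsLieMonomial (d : X → ℕ) : FreeLieAlgebra C X → ℕ → Prop
  | of (x : X) : IsLieMonomial d (of C x) (d x)
  | lie {u v : FreeLieAlgebra C X} {m n : ℕ} :
      IsLieMonomial d u m → IsLieMonomial d v n → IsLieMonomial d ⁅u, v⁆ (m + n)

/-- Homogeneity of an element of the free Lie algebra with respect to a weighting. -/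
def IsHomogeneous (d : X → ℕ) (r : FreeLieAlgebra C X) : Prop :=
  ∃ n : ℕ, r ∈ Submodule.span C {u | IsLieMonomial C d u n}

/-- The support of a sub-arrangement. -/
def arrSupp {X : Type*} (ℬ : Set (Set X)) : Set X := ⋃₀ ℬ

/-- `ℬ` is a closed sub-arrangement of `𝒜`. -/
def IsClosedSub {X : Type*} (𝒜 ℬ : Set (Set X)) : Prop :=
  ℬ ⊆ 𝒜 ∧ ∀ A ∈ 𝒜, A ∉ ℬ → (A ∩ arrSupp ℬ).Subsingleton

/-- The relations `R_ℬ` of a sub-arrangement. -/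
noncomputable def subRel (ℬ : Set (Set X)) (Rel : ∀ A : Set X, Set (FreeLieAlgebra C A)) :
    Set (FreeLieAlgebra C (arrSupp ℬ)) :=
  (⋃ B, ⋃ h : B ∈ ℬ, inclSub C (Set.subset_sUnion_of_mem h) '' Rel B) ∪
    {z | ∃ x y : arrSupp ℬ, (∀ B ∈ ℬ, ¬({(x : X), (y : X)} : Set X) ⊆ B) ∧
      z = ⁅of C x, of C y⁆}

/-- The ideal `⟨R_ℬ⟩` of `F(supp ℬ)`. -/
noncomputable def subIdeal (ℬ : Set (Set X)) (Rel : ∀ A : Set X, Set (FreeLieAlgebra C A)) :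
    LieIdeal C (FreeLieAlgebra C (arrSupp ℬ)) :=
  LieSubmodule.lieSpan C (FreeLieAlgebra C (arrSupp ℬ)) (subRel C ℬ Rel)

/-- The localized Lie algebra `L_ℬ` at a sub-arrangement. -/
noncomputable abbrev SubLie (ℬ : Set (Set X)) (Rel : ∀ A : Set X, Set (FreeLieAlgebra C A)) :=
  FreeLieAlgebra C (arrSupp ℬ) ⧸ subIdeal C ℬ Rel

/-- The quotient map `F(supp ℬ) → L_ℬ`. -/
noncomputable def subMk (ℬ : Set (Set X)) (Rel : ∀ A : Set X, Set (FreeLieAlgebra C A)) :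
    FreeLieAlgebra C (arrSupp ℬ) → SubLie C ℬ Rel :=
  LieSubmodule.Quotient.mk (N := subIdeal C ℬ Rel)

open Classical in
/-- The canonical Lie algebra map `F(X) → L_ℬ` killing the generators outside `supp ℬ`. -/
noncomputable def subProj (ℬ : Set (Set X)) (Rel : ∀ A : Set X, Set (FreeLieAlgebra C A)) :
    FreeLieAlgebra C X →ₗ⁅C⁆ SubLie C ℬ Rel :=
  FreeLieAlgebra.lift C fun x : X =>
    if h : x ∈ arrSupp ℬ then subMk C ℬ Rel (of C (⟨x, h⟩ : arrSupp ℬ)) else 0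

section LieQuotient

variable {R L L' : Type*} [CommRing R] [LieRing L] [LieAlgebra R L] [LieRing L'] [LieAlgebra R L']

namespace LieIdeal

noncomputable def quotientMk (I : LieIdeal R L) : L →ₗ⁅R⁆ L ⧸ I :=
  { (I : Submodule R L).mkQ with
    map_lie' := fun {x y} => LieSubmodule.Quotient.mk_bracket I x y }

noncomputable def quotientLift (I : LieIdeal R L) (f : L →ₗ⁅R⁆ L') (h : I ≤ f.ker) :
    L ⧸ I →ₗ⁅R⁆ L' :=
  { (I : Submodule R L).liftQ f.toLinearMap fun _ hx => LieHom.mem_ker.mp (h hx) with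
    map_lie' := by
      rintro ⟨x⟩ ⟨y⟩
      exact f.map_lie x y }

theorem quotientLift_mk (I : LieIdeal R L) (f : L →ₗ⁅R⁆ L') (h : I ≤ f.ker) (x : L) :
    quotientLift I f h (LieSubmodule.Quotient.mk x) = f x := rfl

end LieIdeal

theorem LieHom.derivedSeries_one_le_ker (f : L →ₗ⁅R⁆ L') (h : ∀ x y, ⁅f x, f y⁆ = 0) :
    LieAlgebra.derivedSeries R L 1 ≤ f.ker := by
  rw [LieAlgebra.derivedSeries_def, LieAlgebra.derivedSeriesOfIdeal_succ,
    LieAlgebra.derivedSeriesOfIdeal_zero, LieSubmodule.lieIdeal_oper_eq_span,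
    LieSubmodule.lieSpan_le]
  rintro _ ⟨x, y, rfl⟩
  simpa only [SetLike.mem_coe, LieHom.mem_ker, LieHom.map_lie] using h x y

end LieQuotient

namespace FreeLieAlgebra

variable {R Y L : Type*} [CommRing R] [LieRing L] [LieAlgebra R L]

theorem lift_apply_mem {g : Y → L} {K : LieSubalgebra R L} (hg : ∀ y, g y ∈ K)
    (u : FreeLieAlgebra R Y) : lift R g u ∈ K := by
  have h : K.incl.comp (lift R fun y => (⟨g y, hg y⟩ : K)) = lift R g :=
    hom_ext fun y => by simp
  rw [← h]
  exact ((lift R fun y => (⟨g y, hg y⟩ : K)) u).2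

/-- The image of a free Lie algebra is the Lie span of the images of the generators,
so it is abelian as soon as those commute. -/
theorem lie_lift_eq_zero {g : Y → L} (hg : ∀ x y, ⁅g x, g y⁆ = 0) (u v : FreeLieAlgebra R Y) :
    ⁅lift R g u, lift R g v⁆ = 0 := by
  let K := LieSubalgebra.lieSpan R L (Set.range g)
  have hK : IsLieAbelian K := LieSubalgebra.isLieAbelian_lieSpan_iff.mpr <| by
    rintro _ ⟨x, rfl⟩ _ ⟨y, rfl⟩
    exact hg x y
  have hmem : ∀ w, lift R g w ∈ K :=
    lift_apply_mem fun y => LieSubalgebra.subset_lieSpan ⟨y, rfl⟩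
  exact congrArg Subtype.val (trivial_lie_zero K K ⟨_, hmem u⟩ ⟨_, hmem v⟩)

theorem derivedSeries_one_le_ker_lift {g : Y → L} (hg : ∀ x y, ⁅g x, g y⁆ = 0) :
    LieAlgebra.derivedSeries R (FreeLieAlgebra R Y) 1 ≤ (lift R g).ker :=
  (lift R g).derivedSeries_one_le_ker (lie_lift_eq_zero hg)

end FreeLieAlgebra

section Localization

variable {A : Set X} {Rel : ∀ A : Set X, Set (FreeLieAlgebra C A)}

theorem locProj_of_mem {x : X} (hx : x ∈ A) :
    locProj C A Rel (of C x) = locMk C A Rel (of C ⟨x, hx⟩) := by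
  simp [locProj, hx]

theorem locProj_of_notMem {x : X} (hx : x ∉ A) : locProj C A Rel (of C x) = 0 := by
  simp [locProj, hx]

theorem locProj_comp_inclX :
    (locProj C A Rel).comp (inclX C A) = LieIdeal.quotientMk (locIdeal C A Rel) :=
  FreeLieAlgebra.hom_ext fun a => by
    simp only [LieHom.comp_apply, inclX, FreeLieAlgebra.lift_of_apply, locProj_of_mem C a.2]
    rfl

/-- Generators of `B` outside `A` go to zero and at most one lies in `A`, so their images
commute and `F(B) → L_A` kills the derived subalgebra. -/
theorem locProj_inclX_eq_zero_of_mem_derivedSeries {B : Set X} (hBA : (B ∩ A).Subsingleton)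
    {r : FreeLieAlgebra C B} (hr : r ∈ LieAlgebra.derivedSeries C (FreeLieAlgebra C B) 1) :
    locProj C A Rel (inclX C B r) = 0 := by
  have hcomp : (locProj C A Rel).comp (inclX C B) =
      FreeLieAlgebra.lift C fun b : B => locProj C A Rel (of C (b : X)) :=
    FreeLieAlgebra.hom_ext fun b => by simp [inclX]
  have hcomm : ∀ a b : B,
      ⁅locProj C A Rel (of C (a : X)), locProj C A Rel (of C (b : X))⁆ = 0 := by
    intro a b
    by_cases ha : (a : X) ∈ A
    · by_cases hb : (b : X) ∈ A
      · obtain rfl : a = b := Subtype.ext (hBA ⟨a.2, ha⟩ ⟨b.2, hb⟩)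
        exact lie_self _
      · rw [locProj_of_notMem C hb, lie_zero]
    · rw [locProj_of_notMem C ha, zero_lie]
  have := FreeLieAlgebra.derivedSeries_one_le_ker_lift hcomm hr
  rwa [← hcomp, LieHom.mem_ker, LieHom.comp_apply] at this

theorem definingIdeal_le_ker_locProj {𝒜 : Set (Set X)} (hA : A ∈ 𝒜)
    (h𝒜 : ∀ B ∈ 𝒜, B ≠ A → (B ∩ A).Subsingleton) (hRel : AdmissibleRel C 𝒜 Rel) :
    definingIdeal C 𝒜 Rel ≤ (locProj C A Rel).ker := by
  rw [definingIdeal, LieSubmodule.lieSpan_le]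
  rintro _ (⟨x, y, hxy, rfl⟩ | hz)
  · simp only [SetLike.mem_coe, LieHom.mem_ker, LieHom.map_lie]
    by_cases hx : x ∈ A
    · have hy : y ∉ A := fun hy => hxy A hA (Set.insert_subset hx (Set.singleton_subset_iff.2 hy))
      rw [locProj_of_notMem C hy, lie_zero]
    · rw [locProj_of_notMem C hx, zero_lie]
  · simp only [Set.mem_iUnion, Set.mem_image] at hz
    obtain ⟨B, hB, r, hr, rfl⟩ := hz
    rw [SetLike.mem_coe, LieHom.mem_ker]
    by_cases hBA : B = A
    · subst hBA
      rw [← LieHom.comp_apply, locProj_comp_inclX]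
      exact LieSubmodule.Quotient.mk_eq_zero'.mpr (LieSubmodule.subset_lieSpan hr)
    · exact locProj_inclX_eq_zero_of_mem_derivedSeries C (h𝒜 B hB hBA) (hRel B hB hr)

end Localization

theorem statement2_general {C : Type*} [CommRing C] {X : Type*}
    (𝒜 : Set (Set X)) (Rel : ∀ A : Set X, Set (FreeLieAlgebra C A))
    (h𝒜 : IsSetArrangement 𝒜) (hRel : AdmissibleRel C 𝒜 Rel)
    (A : Set X) (hA : A ∈ 𝒜)
    (sA : LocLie C A Rel →ₗ⁅C⁆ ArrLie C 𝒜 Rel)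
    (hsA : ∀ a : A, sA (locMk C A Rel (of C a)) = arrMk C 𝒜 Rel (of C (a : X))) :
    (∀ z ∈ definingIdeal C 𝒜 Rel, locProj C A Rel z = 0) ∧
      ∃ πA : ArrLie C 𝒜 Rel →ₗ⁅C⁆ LocLie C A Rel,
        (∀ w : FreeLieAlgebra C X, πA (arrMk C 𝒜 Rel w) = locProj C A Rel w) ∧
          ∀ z : LocLie C A Rel, πA (sA z) = z := by
  have hker := definingIdeal_le_ker_locProj C hA (fun B hB => h𝒜.2.1 B hB A hA) hRel
  let πA := LieIdeal.quotientLift _ _ hker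
  have hsection : (πA.comp sA).comp (LieIdeal.quotientMk (locIdeal C A Rel)) =
      LieIdeal.quotientMk (locIdeal C A Rel) :=
    FreeLieAlgebra.hom_ext fun a => by
      change πA (sA (locMk C A Rel (of C a))) = _
      rw [hsA]
      exact (LieIdeal.quotientLift_mk _ _ hker _).trans (locProj_of_mem C a.2)
  refine ⟨fun z hz => hker hz, πA, fun w => rfl, ?_⟩
  rintro ⟨r⟩
  exact LieHom.congr_fun hsection r

/-- The Lie algebra morphism `F(X) → L_A` sending generators in `A` to their classes and
generators outside `A` to zero annihilates the defining ideal of `L`; hence it induces a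
Lie algebra morphism `π_A : L → L_A` with `π_A ∘ s_A = id`. -/
theorem statement2 {C : Type*} [CommRing C] {X : Type*} [Fintype X]
    (𝒜 : Set (Set X)) (Rel : ∀ A : Set X, Set (FreeLieAlgebra C A))
    (h𝒜 : IsSetArrangement 𝒜) (hRel : AdmissibleRel C 𝒜 Rel)
    (A : Set X) (hA : A ∈ 𝒜)
    (sA : LocLie C A Rel →ₗ⁅C⁆ ArrLie C 𝒜 Rel)
    (hsA : ∀ a : A, sA (locMk C A Rel (of C a)) = arrMk C 𝒜 Rel (of C (a : X))) :
    (∀ z ∈ definingIdeal C 𝒜 Rel, locProj C A Rel z = 0) ∧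
      ∃ πA : ArrLie C 𝒜 Rel →ₗ⁅C⁆ LocLie C A Rel,
        (∀ w : FreeLieAlgebra C X, πA (arrMk C 𝒜 Rel w) = locProj C A Rel w) ∧
          ∀ z : LocLie C A Rel, πA (sA z) = z :=
  statement2_general 𝒜 Rel h𝒜 hRel A hA sA hsA
end

section
/- Let L be a Lie algebra of a set-arrangement 𝒜 on X and let A, B ∈ 𝒜 with A ≠ B. Then π_B' ∘ s_A' = 0, i.e., π_B maps the image s_A(L_A') of the derived subalgebra of L_A to zero in L_B. -/
open FreeLieAlgebra

variable (C : Type*) [CommRing C] {X : Type*}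

open LieSubalgebra

section
variable {R L L' : Type*} [CommRing R] [LieRing L] [LieAlgebra R L] [LieRing L'] [LieAlgebra R L']

def LieIdeal.quotientMk_s3 (I : LieIdeal R L) : L →ₗ⁅R⁆ L ⧸ I :=
  { (LieSubmodule.Quotient.mk' I : L →ₗ[R] L ⧸ I) with map_lie' := rfl }

theorem LieIdeal.quotientMk_surjective (I : LieIdeal R L) : Function.Surjective I.quotientMk_s3 :=
  LieSubmodule.Quotient.surjective_mk' I

theorem LieHom.lie_apply_eq_zero_of_lieSpan_eq_top (f : L →ₗ⁅R⁆ L') {s : Set L}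
    (hs : lieSpan R L s = ⊤) (hf : ∀ x ∈ s, ∀ y ∈ s, ⁅f x, f y⁆ = 0) (x y : L) :
    ⁅f x, f y⁆ = 0 := by
  have : IsLieAbelian f.range := by
    rw [LieHom.range_eq_map, ← hs, map_lieSpan, isLieAbelian_lieSpan_iff]
    rintro _ ⟨x, hx, rfl⟩ _ ⟨y, hy, rfl⟩
    exact hf x hx y hy
  exact congrArg Subtype.val
    (trivial_lie_zero f.range f.range (f.rangeRestrict x) (f.rangeRestrict y))

theorem LieHom.map_eq_zero_of_mem_derivedSeries_one (f : L →ₗ⁅R⁆ L')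
    (hf : ∀ x y, ⁅f x, f y⁆ = 0) {z : L} (hz : z ∈ LieAlgebra.derivedSeries R L 1) :
    f z = 0 := by
  have hker : (LieAlgebra.derivedSeries R L 1 : Submodule R L) ≤
      LinearMap.ker (f : L →ₗ[R] L') := by
    rw [LieAlgebra.coe_derivedSeries_one_eq, Submodule.span_le]
    rintro _ ⟨x, y, rfl⟩
    simp [hf]
  exact hker hz
end

theorem FreeLieAlgebra.lieSpan_range_of :
    lieSpan C (FreeLieAlgebra C X) (Set.range (of C)) = ⊤ := by
  set S := lieSpan C (FreeLieAlgebra C X) (Set.range (of C))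
  let g : FreeLieAlgebra C X →ₗ⁅C⁆ S :=
    lift C fun x => ⟨of C x, subset_lieSpan ⟨x, rfl⟩⟩
  have hg : S.incl.comp g = LieHom.id := hom_ext fun x => by simp [g]
  refine eq_top_iff.2 fun z _ => ?_
  rw [← LieHom.id_apply (R := C) z, ← hg]
  exact (g z).2

theorem FreeLieAlgebra.lieSpan_range_mk_of (I : LieIdeal C (FreeLieAlgebra C X)) :
    lieSpan C (FreeLieAlgebra C X ⧸ I) (Set.range fun x => LieSubmodule.Quotient.mk (of C x)) =
      ⊤ := by
  rw [← (I.quotientMk_s3).range_eq_top.2 I.quotientMk_surjective, LieHom.range_eq_map,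
    ← lieSpan_range_of, map_lieSpan, ← Set.range_comp]
  rfl

theorem statement3_general {C : Type*} [CommRing C] {X : Type*}
    (𝒜 : Set (Set X)) (Rel : ∀ A : Set X, Set (FreeLieAlgebra C A))
    (h𝒜 : IsSetArrangement 𝒜)
    (A B : Set X) (hA : A ∈ 𝒜) (hB : B ∈ 𝒜) (hAB : A ≠ B)
    (sA : LocLie C A Rel →ₗ⁅C⁆ ArrLie C 𝒜 Rel)
    (hsA : ∀ a : A, sA (locMk C A Rel (of C a)) = arrMk C 𝒜 Rel (of C (a : X)))
    (πB : ArrLie C 𝒜 Rel →ₗ⁅C⁆ LocLie C B Rel)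
    (hπB₂ : ∀ x : X, x ∉ B → πB (arrMk C 𝒜 Rel (of C x)) = 0) :
    ∀ z ∈ (LieAlgebra.derivedSeries C (LocLie C A Rel) 1 : Set (LocLie C A Rel)),
      πB (sA z) = 0 := by
  -- `A ∩ B` has at most one point, so all generators of `L_A` go to `0` or to one common element.
  have hgen : ∀ a a' : A,
      ⁅πB (sA (locMk C A Rel (of C a))), πB (sA (locMk C A Rel (of C a')))⁆ = 0 := by
    intro a a'
    rw [hsA, hsA]
    by_cases ha : (a : X) ∈ B
    · by_cases ha' : (a' : X) ∈ B
      · obtain rfl : a = a' := Subtype.ext (h𝒜.2.1 A hA B hB hAB ⟨a.2, ha⟩ ⟨a'.2, ha'⟩)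
        exact lie_self _
      · rw [hπB₂ _ ha', lie_zero]
    · rw [hπB₂ _ ha, zero_lie]
  have hcomm : ∀ x y, ⁅(πB.comp sA) x, (πB.comp sA) y⁆ = 0 :=
    (πB.comp sA).lie_apply_eq_zero_of_lieSpan_eq_top (lieSpan_range_mk_of C (locIdeal C A Rel))
      (by rintro _ ⟨a, rfl⟩ _ ⟨a', rfl⟩; exact hgen a a')
  exact fun z hz => (πB.comp sA).map_eq_zero_of_mem_derivedSeries_one hcomm hz

/-- For distinct `A, B ∈ 𝒜`, `π_B' ∘ s_A' = 0`: `π_B` kills the image under `s_A` of the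
derived subalgebra of `L_A`. -/
theorem statement3 {C : Type*} [CommRing C] {X : Type*} [Fintype X]
    (𝒜 : Set (Set X)) (Rel : ∀ A : Set X, Set (FreeLieAlgebra C A))
    (h𝒜 : IsSetArrangement 𝒜) (hRel : AdmissibleRel C 𝒜 Rel)
    (A B : Set X) (hA : A ∈ 𝒜) (hB : B ∈ 𝒜) (hAB : A ≠ B)
    (sA : LocLie C A Rel →ₗ⁅C⁆ ArrLie C 𝒜 Rel)
    (hsA : ∀ a : A, sA (locMk C A Rel (of C a)) = arrMk C 𝒜 Rel (of C (a : X)))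
    (πB : ArrLie C 𝒜 Rel →ₗ⁅C⁆ LocLie C B Rel)
    (hπB₁ : ∀ b : B, πB (arrMk C 𝒜 Rel (of C (b : X))) = locMk C B Rel (of C b))
    (hπB₂ : ∀ x : X, x ∉ B → πB (arrMk C 𝒜 Rel (of C x)) = 0) :
    ∀ z ∈ (LieAlgebra.derivedSeries C (LocLie C A Rel) 1 : Set (LocLie C A Rel)),
      πB (sA z) = 0 :=
  statement3_general 𝒜 Rel h𝒜 A B hA hB hAB sA hsA πB hπB₂
end

section
/- Let L be a Lie algebra of a set-arrangement 𝒜 on X. The following conditions are equivalent: 1) [x, im(s_A')] = 0 for all A ∈ 𝒜 and all x ∈ X \ A; 2) im(s_A') is an ideal in L for all A ∈ 𝒜; 3) L' = Σ_{A∈𝒜} im(s_A'); 4) s' is surjective; 5) π' is injective. -/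
open FreeLieAlgebra

variable (C : Type*) [CommRing C] {X : Type*}

/-!
The maps `s_A` are split by `π_A`, and for `A ≠ B` the composite `π_B ∘ s_A` sends the generators
of `L_A` to pairwise commuting elements of `L_B`, because `A ∩ B` has at most one element; hence it
kills `L_A'`. So `π_B ∘ s_A' = δ_AB`, which gives 4 ⇒ 5, and 5 ⇒ 1 because every `π_B` kills
`⁅x, s_A r⁆` for `x ∉ A`. The implications 1 ⇒ 2 ⇒ 3 only use that `L` is generated by `X`: a
subspace stable under `ad x` for all generators `x` is an ideal, and an ideal containing all
brackets `⁅x, y⁆` of generators contains `L'`; here `⁅x, y⁆` lies in `im s_A'` when `{x, y} ⊆ A`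
and vanishes in `L` when no member of `𝒜` contains `{x, y}`.
-/

namespace LieSubalgebra

variable {R L : Type*} [CommRing R] [LieRing L] [LieAlgebra R L] {S : Set L}

/-- By the Jacobi identity, `{u | ⁅u, M⁆ ⊆ N}` is a Lie subalgebra as soon as `N ⊆ M`. -/
theorem lie_mem_of_lieSpan_eq_top (hS : lieSpan R L S = ⊤) {M : Set L} {N : Submodule R L}
    (hM : ∀ x ∈ S, ∀ m ∈ M, ⁅x, m⁆ ∈ N) (hNM : (N : Set L) ⊆ M) (u : L) :
    ∀ m ∈ M, ⁅u, m⁆ ∈ N := by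
  have hu : u ∈ lieSpan R L S := hS ▸ mem_top u
  induction hu using lieSpan_induction with
  | mem x hx => exact hM x hx
  | zero => simp
  | add u v _ _ hu hv => exact fun m hm => by rw [add_lie]; exact add_mem (hu m hm) (hv m hm)
  | smul c u _ hu => exact fun m hm => by rw [smul_lie]; exact N.smul_mem c (hu m hm)
  | lie u v _ _ hu hv =>
    exact fun m hm => by
      rw [lie_lie]; exact sub_mem (hu _ (hNM (hv m hm))) (hv _ (hNM (hu m hm)))

end LieSubalgebra

theorem LieAlgebra.lie_mem_derivedSeries_one {R L : Type*} [CommRing R] [LieRing L]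
    [LieAlgebra R L] (x y : L) : ⁅x, y⁆ ∈ LieAlgebra.derivedSeries R L 1 := by
  rw [LieAlgebra.derivedSeries_def, LieAlgebra.derivedSeriesOfIdeal_succ,
    LieAlgebra.derivedSeriesOfIdeal_zero]
  exact LieSubmodule.lie_mem_lie (LieSubmodule.mem_top x) (LieSubmodule.mem_top y)

theorem LieAlgebra.derivedSeries_one_le_of_lieSpan_eq_top {R L : Type*} [CommRing R] [LieRing L]
    [LieAlgebra R L] {S : Set L} (hS : LieSubalgebra.lieSpan R L S = ⊤) (I : LieIdeal R L)
    (h : ∀ x ∈ S, ∀ y ∈ S, ⁅x, y⁆ ∈ I) : LieAlgebra.derivedSeries R L 1 ≤ I := by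
  have hS_I : ∀ u, ∀ y ∈ S ∪ I, ⁅u, y⁆ ∈ I :=
    LieSubalgebra.lie_mem_of_lieSpan_eq_top hS (N := I)
      (by rintro x hx y (hy | hy); exacts [h x hx y hy, I.lie_mem hy]) Set.subset_union_right
  have hL_I : ∀ u, ∀ v ∈ Set.univ, ⁅u, v⁆ ∈ I :=
    LieSubalgebra.lie_mem_of_lieSpan_eq_top hS (N := I)
      (fun x hx v _ => by rw [← lie_skew]; exact neg_mem (hS_I v x (Or.inl hx)))
      (Set.subset_univ _)
  rw [LieAlgebra.derivedSeries_def, LieAlgebra.derivedSeriesOfIdeal_succ,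
    LieAlgebra.derivedSeriesOfIdeal_zero, LieSubmodule.lie_le_iff]
  exact fun u _ v _ => hL_I u v trivial

theorem LieHom.ext_of_lieSpan_eq_top {R L L' : Type*} [CommRing R] [LieRing L] [LieAlgebra R L]
    [LieRing L'] [LieAlgebra R L'] {S : Set L} (hS : LieSubalgebra.lieSpan R L S = ⊤)
    {f g : L →ₗ⁅R⁆ L'} (h : ∀ x ∈ S, f x = g x) : f = g := by
  ext u
  have hu : u ∈ LieSubalgebra.lieSpan R L S := hS ▸ LieSubalgebra.mem_top u
  induction hu using LieSubalgebra.lieSpan_induction with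
  | mem x hx => exact h x hx
  | zero => simp
  | add u v _ _ hu hv => simp [hu, hv]
  | smul c u _ hu => simp [hu]
  | lie u v _ _ hu hv => simp [hu, hv]

namespace FreeLieAlgebra

variable {R X : Type*} [CommRing R]

theorem lieSpan_range_of_s5 : LieSubalgebra.lieSpan R (FreeLieAlgebra R X) (Set.range (of R)) = ⊤ := by
  set K := LieSubalgebra.lieSpan R (FreeLieAlgebra R X) (Set.range (of R))
  let F : FreeLieAlgebra R X →ₗ⁅R⁆ K :=
    lift R fun x => ⟨of R x, LieSubalgebra.subset_lieSpan ⟨x, rfl⟩⟩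
  have hF : K.incl.comp F = LieHom.id := hom_ext fun x => by simp [F]
  refine eq_top_iff.2 fun u _ => ?_
  rw [← show K.incl (F u) = u from DFunLike.congr_fun hF u]
  exact (F u).2

theorem lieSpan_range_mk_of_s5 (I : LieIdeal R (FreeLieAlgebra R X)) :
    LieSubalgebra.lieSpan R (FreeLieAlgebra R X ⧸ I)
      (Set.range fun x => LieSubmodule.Quotient.mk (N := I) (of R x)) = ⊤ := by
  rw [eq_top_iff]
  rintro u -
  obtain ⟨w, rfl⟩ := LieSubmodule.Quotient.surjective_mk' I u
  have hw : w ∈ LieSubalgebra.lieSpan R _ (Set.range (of R)) := by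
    rw [lieSpan_range_of_s5]; exact LieSubalgebra.mem_top w
  induction hw using LieSubalgebra.lieSpan_induction with
  | mem _ hx => obtain ⟨x, rfl⟩ := hx; exact LieSubalgebra.subset_lieSpan ⟨x, rfl⟩
  | zero => simp
  | add u v _ _ hu hv => simpa using add_mem hu hv
  | smul c u _ hu => simpa using LieSubalgebra.smul_mem _ c hu
  | lie u v _ _ hu hv =>
    show LieSubmodule.Quotient.mk ⁅u, v⁆ ∈ _
    rw [LieSubmodule.Quotient.mk_bracket]
    exact LieSubalgebra.lie_mem _ hu hv

end FreeLieAlgebra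

theorem Submodule.exists_eq_sum_of_mem_iSup_map {R N ι : Type*} [Semiring R] [AddCommMonoid N]
    [Module R N] [Fintype ι] {M : ι → Type*} [∀ i, AddCommMonoid (M i)] [∀ i, Module R (M i)]
    (f : ∀ i, M i →ₗ[R] N) (p : ∀ i, Submodule R (M i)) {x : N}
    (hx : x ∈ ⨆ i, (p i).map (f i)) : ∃ z : ∀ i, M i, (∀ i, z i ∈ p i) ∧ x = ∑ i, f i (z i) := by
  classical
  obtain ⟨μ, hμ⟩ :=
    (Submodule.mem_iSup_finset_iff_exists_sum (s := Finset.univ) _ x).1 (by simpa using hx)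
  choose z hz hfz using fun i => Submodule.mem_map.1 (μ i).2
  exact ⟨z, hz, by rw [← hμ]; simp [hfz]⟩

theorem eq_of_forall_apply_eq_of_forall_eq_sum {R N ι : Type*} [Ring R] [AddCommGroup N]
    [Module R N] [Fintype ι] {M : ι → Type*} [∀ i, AddCommGroup (M i)]
    [∀ i, Module R (M i)] (s : ∀ i, M i →ₗ[R] N) (π : ∀ i, N →ₗ[R] M i)
    (p : ∀ i, Submodule R (M i)) (hπs : ∀ i, ∀ m ∈ p i, π i (s i m) = m)
    (hπs_ne : ∀ i j, i ≠ j → ∀ m ∈ p i, π j (s i m) = 0) (V : Submodule R N)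
    (hV : ∀ u ∈ V, ∃ z : ∀ i, M i, (∀ i, z i ∈ p i) ∧ u = ∑ i, s i (z i))
    {u v : N} (hu : u ∈ V) (hv : v ∈ V) (huv : ∀ i, π i u = π i v) : u = v := by
  obtain ⟨z, hz, hsum⟩ := hV (u - v) (sub_mem hu hv)
  have hz_zero (j : ι) : z j = 0 := by
    have := congrArg (π j) hsum
    rwa [map_sub, huv, sub_self, map_sum, Finset.sum_eq_single j
      (fun i _ hij => hπs_ne i j hij _ (hz i)) (by simp), hπs j _ (hz j), eq_comm] at this
  rw [← sub_eq_zero, hsum]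
  simp [hz_zero]

section Arrangement

variable {C} {𝒜 : Set (Set X)} {Rel : ∀ A : Set X, Set (FreeLieAlgebra C A)}

theorem lieSpan_range_arrMk_of :
    LieSubalgebra.lieSpan C (ArrLie C 𝒜 Rel) (Set.range fun x => arrMk C 𝒜 Rel (of C x)) = ⊤ :=
  lieSpan_range_mk_of_s5 _

theorem lieSpan_range_locMk_of (A : Set X) :
    LieSubalgebra.lieSpan C (LocLie C A Rel) (Set.range fun a => locMk C A Rel (of C a)) = ⊤ :=
  lieSpan_range_mk_of_s5 _

theorem lie_arrMk_of_eq_zero {x y : X} (hxy : ∀ A ∈ 𝒜, ¬({x, y} : Set X) ⊆ A) :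
    ⁅arrMk C 𝒜 Rel (of C x), arrMk C 𝒜 Rel (of C y)⁆ = 0 := by
  rw [arrMk, ← LieSubmodule.Quotient.mk_bracket, LieSubmodule.Quotient.mk_eq_zero']
  exact LieSubmodule.subset_lieSpan (Or.inl ⟨x, y, hxy, rfl⟩)

theorem leftInverse_of_apply_of {A : Set X} {s : LocLie C A Rel →ₗ⁅C⁆ ArrLie C 𝒜 Rel}
    {π : ArrLie C 𝒜 Rel →ₗ⁅C⁆ LocLie C A Rel}
    (hs : ∀ a : A, s (locMk C A Rel (of C a)) = arrMk C 𝒜 Rel (of C (a : X)))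
    (hπ : ∀ a : A, π (arrMk C 𝒜 Rel (of C (a : X))) = locMk C A Rel (of C a)) :
    Function.LeftInverse π s := by
  have : π.comp s = LieHom.id := LieHom.ext_of_lieSpan_eq_top (lieSpan_range_locMk_of A)
    (by rintro _ ⟨a, rfl⟩; simp [hs, hπ])
  exact DFunLike.congr_fun this

theorem apply_eq_zero_of_inter_subsingleton {A B : Set X} (hAB : (A ∩ B).Subsingleton)
    {s : LocLie C A Rel →ₗ⁅C⁆ ArrLie C 𝒜 Rel} {π : ArrLie C 𝒜 Rel →ₗ⁅C⁆ LocLie C B Rel}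
    (hs : ∀ a : A, s (locMk C A Rel (of C a)) = arrMk C 𝒜 Rel (of C (a : X)))
    (hπ : ∀ x ∉ B, π (arrMk C 𝒜 Rel (of C x)) = 0) {u : LocLie C A Rel}
    (hu : u ∈ LieAlgebra.derivedSeries C (LocLie C A Rel) 1) : π (s u) = 0 := by
  suffices LieAlgebra.derivedSeries C (LocLie C A Rel) 1 ≤ (π.comp s).ker from
    LieHom.mem_ker.1 (this hu)
  refine LieAlgebra.derivedSeries_one_le_of_lieSpan_eq_top (lieSpan_range_locMk_of A) _ ?_
  rintro _ ⟨a, rfl⟩ _ ⟨b, rfl⟩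
  rw [LieHom.mem_ker, LieHom.map_lie, LieHom.comp_apply, LieHom.comp_apply, hs, hs]
  by_cases ha : (a : X) ∈ B
  · by_cases hb : (b : X) ∈ B
    · rw [hAB ⟨a.2, ha⟩ ⟨b.2, hb⟩, lie_self]
    · rw [hπ _ hb, lie_zero]
  · rw [hπ _ ha, zero_lie]

theorem lie_mem_image_derivedSeries_of_lie_of_not_mem {A : Set X}
    {s : LocLie C A Rel →ₗ⁅C⁆ ArrLie C 𝒜 Rel}
    (hs : ∀ a : A, s (locMk C A Rel (of C a)) = arrMk C 𝒜 Rel (of C (a : X)))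
    (h : ∀ x ∉ A, ∀ r ∈ s '' (LieAlgebra.derivedSeries C (LocLie C A Rel) 1 : Set (LocLie C A Rel)),
      ⁅arrMk C 𝒜 Rel (of C x), r⁆ = 0) (u : ArrLie C 𝒜 Rel) :
    ∀ r ∈ s '' (LieAlgebra.derivedSeries C (LocLie C A Rel) 1 : Set (LocLie C A Rel)),
      ⁅u, r⁆ ∈ s '' (LieAlgebra.derivedSeries C (LocLie C A Rel) 1 : Set (LocLie C A Rel)) := by
  let N := (LieSubmodule.toSubmodule (LieAlgebra.derivedSeries C (LocLie C A Rel) 1)).map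
    s.toLinearMap
  refine LieSubalgebra.lie_mem_of_lieSpan_eq_top lieSpan_range_arrMk_of (N := N) ?_ subset_rfl u
  rintro _ ⟨x, rfl⟩ _ ⟨m, hm, rfl⟩
  by_cases hx : x ∈ A
  · refine ⟨⁅locMk C A Rel (of C ⟨x, hx⟩), m⁆, LieSubmodule.lie_mem _ hm, ?_⟩
    rw [LieHom.coe_toLinearMap, LieHom.map_lie, hs]
  · convert zero_mem N using 1
    exact h x hx _ ⟨m, hm, rfl⟩

theorem derivedSeries_eq_iSup_map_of_lie_mem {s : ∀ A : 𝒜, LocLie C A Rel →ₗ⁅C⁆ ArrLie C 𝒜 Rel}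
    (hs : ∀ (A : 𝒜) (a : (A : Set X)),
      s A (locMk C (A : Set X) Rel (of C a)) = arrMk C 𝒜 Rel (of C (a : X)))
    (h : ∀ (A : 𝒜) (u : ArrLie C 𝒜 Rel),
      ∀ r ∈ s A '' (LieAlgebra.derivedSeries C (LocLie C (A : Set X) Rel) 1 : Set (LocLie C A Rel)),
        ⁅u, r⁆ ∈ s A ''
          (LieAlgebra.derivedSeries C (LocLie C (A : Set X) Rel) 1 : Set (LocLie C A Rel))) :
    LieSubmodule.toSubmodule (LieAlgebra.derivedSeries C (ArrLie C 𝒜 Rel) 1) =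
      ⨆ A : 𝒜, Submodule.map (s A).toLinearMap
        (LieSubmodule.toSubmodule (LieAlgebra.derivedSeries C (LocLie C (A : Set X) Rel) 1)) := by
  let I (A : 𝒜) : LieIdeal C (ArrLie C 𝒜 Rel) :=
    { Submodule.map (s A).toLinearMap
        (LieSubmodule.toSubmodule (LieAlgebra.derivedSeries C (LocLie C (A : Set X) Rel) 1)) with
      lie_mem := fun {u r} hr => h A u r hr }
  change _ = ⨆ A, LieSubmodule.toSubmodule (I A)
  rw [← LieSubmodule.iSup_toSubmodule, LieSubmodule.toSubmodule_inj]
  refine le_antisymm (LieAlgebra.derivedSeries_one_le_of_lieSpan_eq_top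
    lieSpan_range_arrMk_of _ ?_) (iSup_le fun A => ?_)
  · rintro _ ⟨x, rfl⟩ _ ⟨y, rfl⟩
    by_cases hxy : ∃ A ∈ 𝒜, ({x, y} : Set X) ⊆ A
    · obtain ⟨A, hA, hxyA⟩ := hxy
      refine LieSubmodule.mem_iSup_of_mem ⟨A, hA⟩ ⟨⁅locMk C A Rel (of C ⟨x, hxyA (by simp)⟩),
        locMk C A Rel (of C ⟨y, hxyA (by simp)⟩)⁆, LieAlgebra.lie_mem_derivedSeries_one _ _, ?_⟩
      rw [LieHom.coe_toLinearMap, LieHom.map_lie, hs, hs]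
    · simp only [not_exists, not_and] at hxy
      rw [lie_arrMk_of_eq_zero hxy]
      exact zero_mem _
  · rintro _ ⟨m, hm, rfl⟩
    exact LieIdeal.derivedSeries_map_le 1 (LieIdeal.mem_map hm)

end Arrangement

theorem statement5_general {C : Type*} [CommRing C] {X : Type*}
    (𝒜 : Set (Set X)) [Fintype ↥𝒜] (Rel : ∀ A : Set X, Set (FreeLieAlgebra C A))
    (h𝒜 : IsSetArrangement 𝒜)
    (s : ∀ A : 𝒜, LocLie C (A : Set X) Rel →ₗ⁅C⁆ ArrLie C 𝒜 Rel)
    (hs : ∀ (A : 𝒜) (a : (A : Set X)),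
      s A (locMk C (A : Set X) Rel (of C a)) = arrMk C 𝒜 Rel (of C (a : X)))
    (π : ∀ A : 𝒜, ArrLie C 𝒜 Rel →ₗ⁅C⁆ LocLie C (A : Set X) Rel)
    (hπ₁ : ∀ (A : 𝒜) (a : (A : Set X)),
      π A (arrMk C 𝒜 Rel (of C (a : X))) = locMk C (A : Set X) Rel (of C a))
    (hπ₂ : ∀ (A : 𝒜) (x : X), x ∉ (A : Set X) → π A (arrMk C 𝒜 Rel (of C x)) = 0) :
    List.TFAE [
      -- 1) `[x, im(s_A')] = 0` for `x ∉ A`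
      ∀ (A : 𝒜) (x : X), x ∉ (A : Set X) →
        ∀ r ∈ s A ''
          (LieAlgebra.derivedSeries C (LocLie C (A : Set X) Rel) 1 : Set (LocLie C (A : Set X) Rel)),
          ⁅arrMk C 𝒜 Rel (of C x), r⁆ = 0,
      -- 2) `im(s_A')` is an ideal in `L`
      ∀ (A : 𝒜) (u : ArrLie C 𝒜 Rel),
        ∀ r ∈ s A ''
          (LieAlgebra.derivedSeries C (LocLie C (A : Set X) Rel) 1 : Set (LocLie C (A : Set X) Rel)),
          ⁅u, r⁆ ∈ s A ''
            (LieAlgebra.derivedSeries C (LocLie C (A : Set X) Rel) 1 : Set (LocLie C (A : Set X) Rel)),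
      -- 3) `L' = Σ_A im(s_A')`
      LieSubmodule.toSubmodule (LieAlgebra.derivedSeries C (ArrLie C 𝒜 Rel) 1) =
        ⨆ A : 𝒜, Submodule.map (s A).toLinearMap
          (LieSubmodule.toSubmodule (LieAlgebra.derivedSeries C (LocLie C (A : Set X) Rel) 1)),
      -- 4) `s'` is surjective
      ∀ u ∈ LieAlgebra.derivedSeries C (ArrLie C 𝒜 Rel) 1,
        ∃ z : ∀ A : 𝒜, LocLie C (A : Set X) Rel,
          (∀ A : 𝒜, z A ∈ LieAlgebra.derivedSeries C (LocLie C (A : Set X) Rel) 1) ∧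
          u = ∑ A : 𝒜, s A (z A),
      -- 5) `π'` is injective
      ∀ u ∈ LieAlgebra.derivedSeries C (ArrLie C 𝒜 Rel) 1,
        ∀ v ∈ LieAlgebra.derivedSeries C (ArrLie C 𝒜 Rel) 1,
          (∀ A : 𝒜, π A u = π A v) → u = v] := by
  have hπs (A : 𝒜) : Function.LeftInverse (π A) (s A) := leftInverse_of_apply_of (hs A) (hπ₁ A)
  have hπs_ne (A B : 𝒜) (hAB : A ≠ B) (u : LocLie C A Rel)
      (hu : u ∈ LieAlgebra.derivedSeries C (LocLie C A Rel) 1) : π B (s A u) = 0 := by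
    have hAB_inter := h𝒜.2.1 _ A.2 _ B.2 (Subtype.coe_injective.ne hAB)
    exact apply_eq_zero_of_inter_subsingleton hAB_inter (hs A) (hπ₂ B) hu
  tfae_have 1 → 2 := fun h1 A => lie_mem_image_derivedSeries_of_lie_of_not_mem (hs A) (h1 A)
  tfae_have 2 → 3 := derivedSeries_eq_iSup_map_of_lie_mem hs
  tfae_have 3 → 4 := fun h3 u hu => Submodule.exists_eq_sum_of_mem_iSup_map _ _ (h3 ▸ hu)
  tfae_have 4 → 5 := fun h4 u hu v hv => eq_of_forall_apply_eq_of_forall_eq_sum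
    (fun A => (s A).toLinearMap) (fun A => (π A).toLinearMap) _ (fun A m _ => hπs A m) hπs_ne _
    h4 hu hv
  tfae_have 5 → 1 := by
    rintro h5 A x hx _ ⟨m, hm, rfl⟩
    refine h5 _ (LieAlgebra.lie_mem_derivedSeries_one _ _) 0 (zero_mem _) fun B => ?_
    rw [map_zero, LieHom.map_lie]
    obtain rfl | hAB := eq_or_ne A B
    · rw [hπ₂ A x hx, zero_lie]
    · rw [hπs_ne A B hAB m hm, lie_zero]
  tfae_finish

/-- The five conditions of Theorem 2.7 (`\ref{eq}`) are equivalent: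
1) `[x, im(s_A')] = 0` for all `A ∈ 𝒜` and `x ∈ X \ A`;
2) `im(s_A')` is an ideal in `L` for all `A ∈ 𝒜`;
3) `L' = Σ_A im(s_A')`;
4) `s'` is surjective;
5) `π'` is injective. -/
theorem statement5 {C : Type*} [CommRing C] {X : Type*} [Fintype X]
    (𝒜 : Set (Set X)) [Fintype ↥𝒜] (Rel : ∀ A : Set X, Set (FreeLieAlgebra C A))
    (h𝒜 : IsSetArrangement 𝒜) (hRel : AdmissibleRel C 𝒜 Rel)
    (s : ∀ A : 𝒜, LocLie C (A : Set X) Rel →ₗ⁅C⁆ ArrLie C 𝒜 Rel)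
    (hs : ∀ (A : 𝒜) (a : (A : Set X)),
      s A (locMk C (A : Set X) Rel (of C a)) = arrMk C 𝒜 Rel (of C (a : X)))
    (π : ∀ A : 𝒜, ArrLie C 𝒜 Rel →ₗ⁅C⁆ LocLie C (A : Set X) Rel)
    (hπ₁ : ∀ (A : 𝒜) (a : (A : Set X)),
      π A (arrMk C 𝒜 Rel (of C (a : X))) = locMk C (A : Set X) Rel (of C a))
    (hπ₂ : ∀ (A : 𝒜) (x : X), x ∉ (A : Set X) → π A (arrMk C 𝒜 Rel (of C x)) = 0) :
    List.TFAE [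
      -- 1) `[x, im(s_A')] = 0` for `x ∉ A`
      ∀ (A : 𝒜) (x : X), x ∉ (A : Set X) →
        ∀ r ∈ s A ''
          (LieAlgebra.derivedSeries C (LocLie C (A : Set X) Rel) 1 : Set (LocLie C (A : Set X) Rel)),
          ⁅arrMk C 𝒜 Rel (of C x), r⁆ = 0,
      -- 2) `im(s_A')` is an ideal in `L`
      ∀ (A : 𝒜) (u : ArrLie C 𝒜 Rel),
        ∀ r ∈ s A ''
          (LieAlgebra.derivedSeries C (LocLie C (A : Set X) Rel) 1 : Set (LocLie C (A : Set X) Rel)),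
          ⁅u, r⁆ ∈ s A ''
            (LieAlgebra.derivedSeries C (LocLie C (A : Set X) Rel) 1 : Set (LocLie C (A : Set X) Rel)),
      -- 3) `L' = Σ_A im(s_A')`
      LieSubmodule.toSubmodule (LieAlgebra.derivedSeries C (ArrLie C 𝒜 Rel) 1) =
        ⨆ A : 𝒜, Submodule.map (s A).toLinearMap
          (LieSubmodule.toSubmodule (LieAlgebra.derivedSeries C (LocLie C (A : Set X) Rel) 1)),
      -- 4) `s'` is surjective
      ∀ u ∈ LieAlgebra.derivedSeries C (ArrLie C 𝒜 Rel) 1,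
        ∃ z : ∀ A : 𝒜, LocLie C (A : Set X) Rel,
          (∀ A : 𝒜, z A ∈ LieAlgebra.derivedSeries C (LocLie C (A : Set X) Rel) 1) ∧
          u = ∑ A : 𝒜, s A (z A),
      -- 5) `π'` is injective
      ∀ u ∈ LieAlgebra.derivedSeries C (ArrLie C 𝒜 Rel) 1,
        ∀ v ∈ LieAlgebra.derivedSeries C (ArrLie C 𝒜 Rel) 1,
          (∀ A : 𝒜, π A u = π A v) → u = v] :=
  statement5_general 𝒜 Rel h𝒜 s hs π hπ₁ hπ₂
end

section
/- Let L be a Lie algebra of a set-arrangement 𝒜 on X satisfying the replacement condition, suppose all two-element members of 𝒜 are pairwise disjoint, and suppose that for every A ∈ 𝒜 there is at most one B ∈ 𝒜 with |B| = 2 and A ∩ B ≠ ∅. If [x,[y,z]] = 0 in L for every A ∈ 𝒜, all y, z ∈ A, and all x ∈ X \ A, then [x, im(s_A')] = 0 for all A ∈ 𝒜 and all x ∈ X \ A. -/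
open FreeLieAlgebra

variable (C : Type*) [CommRing C] {X : Type*}

/-!
Fix `A ∈ 𝒜` and let `P ⊆ L_A'` consist of the `w` with `⁅b, s_A w⁆ = 0` for all `b ∉ A`. The
hypothesis puts the brackets of two generators of `L_A` into `P`, and `P` is stable under `ad g`,
`g ∈ A`: by Jacobi `⁅x, ⁅g, s_A w⁆⁆ = ⁅⁅x, g⁆, s_A w⁆ + ⁅g, ⁅x, s_A w⁆⁆`, and `⁅⁅x, g⁆, s_A w⁆ = 0`.
For the latter let `B` be the member containing `x` and `g` (without one, `⁅x, g⁆ = 0`), so that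
`A ∩ B = {g}`. If `|B| ≥ 3`, the replacement condition at `g` writes `⁅x, g⁆ ∈ s_B(L_B')` in terms of
`B \ {g}`, which lies outside `A` and hence commutes with `s_A w`. If `|B| = 2`, then `|A| ≥ 3`, and
the replacement condition writes `w` in terms of `A \ {g}`, whose elements lie outside `B` and hence
commute with `⁅x, g⁆`. A subspace that is stable under `ad` of a generating set and contains the
brackets of generators contains the derived algebra, so `P = L_A'`.
-/

open LieSubalgebra

section Generators

variable {R L : Type*} [CommRing R] [LieRing L] [LieAlgebra R L]

theorem FreeLieAlgebra.lieSpan_range_of_eq_top (X : Type*) :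
    lieSpan R (FreeLieAlgebra R X) (Set.range (of R)) = ⊤ := by
  set K := lieSpan R (FreeLieAlgebra R X) (Set.range (of R))
  let f : FreeLieAlgebra R X →ₗ⁅R⁆ K := lift R fun x => ⟨of R x, subset_lieSpan ⟨x, rfl⟩⟩
  have hf : K.incl.comp f = LieHom.id := hom_ext fun x => by simp [f]
  refine eq_top_iff.2 fun u _ => ?_
  have hu : (f u : FreeLieAlgebra R X) = u := LieHom.congr_fun hf u
  exact hu ▸ (f u).2

theorem lieSpan_image_mk_eq_top (I : LieIdeal R L) {S : Set L} (hS : lieSpan R L S = ⊤) :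
    lieSpan R (L ⧸ I) ((LieSubmodule.Quotient.mk : L → L ⧸ I) '' S) = ⊤ := by
  rw [eq_top_iff]
  rintro u -
  obtain ⟨v, rfl⟩ := LieSubmodule.Quotient.surjective_mk' I u
  have hv : v ∈ lieSpan R L S := hS ▸ mem_top v
  induction hv using lieSpan_induction with
  | mem x hx => exact subset_lieSpan ⟨x, hx, rfl⟩
  | zero => exact zero_mem _
  | add x y _ _ hx hy => exact add_mem hx hy
  | smul a x _ hx => exact LieSubalgebra.smul_mem _ a hx
  | lie x y _ _ hx hy => exact lie_mem _ hx hy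

theorem lie_map_eq_zero_of_mem_lieSpan {L' : Type*} [LieRing L'] [LieAlgebra R L']
    (f : L →ₗ⁅R⁆ L') {c : L'} {S : Set L} (h : ∀ z ∈ S, ⁅c, f z⁆ = 0) {v : L}
    (hv : v ∈ lieSpan R L S) : ⁅c, f v⁆ = 0 := by
  induction hv using lieSpan_induction with
  | mem z hz => exact h z hz
  | zero => rw [map_zero, lie_zero]
  | add x y _ _ hx hy => rw [map_add, lie_add, hx, hy, add_zero]
  | smul a x _ hx => rw [map_smul, lie_smul, hx, smul_zero]
  | lie x y _ _ hx hy => rw [LieHom.map_lie, leibniz_lie, hx, hy, zero_lie, lie_zero, add_zero]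

theorem lie_mem_of_forall_generator_lie_mem {S : Set L} (hS : lieSpan R L S = ⊤)
    {P : Submodule R L} (hP : ∀ s ∈ S, ∀ p ∈ P, ⁅s, p⁆ ∈ P) (u : L) {p : L}
    (hp : p ∈ P) : ⁅u, p⁆ ∈ P := by
  have hu : u ∈ lieSpan R L S := hS ▸ mem_top u
  induction hu using lieSpan_induction generalizing p with
  | mem s hs => exact hP s hs p hp
  | zero => simp
  | add x y _ _ hx hy => rw [add_lie]; exact add_mem (hx hp) (hy hp)
  | smul a x _ hx => rw [smul_lie]; exact P.smul_mem a (hx hp)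
  | lie x y _ _ hx hy => rw [lie_lie]; exact sub_mem (hx (hy hp)) (hy (hx hp))

theorem derivedSeries_one_le_of_lieSpan_eq_top {S : Set L} (hS : lieSpan R L S = ⊤)
    {P : Submodule R L} (hP : ∀ s ∈ S, ∀ p ∈ P, ⁅s, p⁆ ∈ P) (hSS : ∀ s ∈ S, ∀ t ∈ S, ⁅s, t⁆ ∈ P) :
    (LieAlgebra.derivedSeries R L 1 : Submodule R L) ≤ P := by
  have hideal := lie_mem_of_forall_generator_lie_mem hS hP
  have hgen : ∀ s ∈ S, ∀ v, ⁅s, v⁆ ∈ P := by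
    intro s hs v
    have hv : v ∈ lieSpan R L S := hS ▸ mem_top v
    induction hv using lieSpan_induction with
    | mem t ht => exact hSS s hs t ht
    | zero => simp
    | add x y _ _ hx hy => rw [lie_add]; exact add_mem hx hy
    | smul a x _ hx => rw [lie_smul]; exact P.smul_mem a hx
    | lie x y _ _ hx hy =>
      rw [leibniz_lie, ← lie_skew]
      exact add_mem (neg_mem (hideal y hx)) (hideal x hy)
  have hall : ∀ u v : L, ⁅u, v⁆ ∈ P := by
    intro u v
    have hu : u ∈ lieSpan R L S := hS ▸ mem_top u
    induction hu using lieSpan_induction with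
    | mem s hs => exact hgen s hs v
    | zero => simp
    | add x y _ _ hx hy => rw [add_lie]; exact add_mem hx hy
    | smul a x _ hx => rw [smul_lie]; exact P.smul_mem a hx
    | lie x y _ _ hx hy => rw [lie_lie]; exact sub_mem (hideal x hy) (hideal y hx)
  rw [LieAlgebra.coe_derivedSeries_one_eq, Submodule.span_le]
  rintro _ ⟨u, v, rfl⟩
  exact hall u v

end Generators

section Arrangement

variable {C} {𝒜 : Set (Set X)} {Rel : ∀ A : Set X, Set (FreeLieAlgebra C A)}

theorem lieSpan_locMk_of_eq_top (A : Set X) :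
    lieSpan C (LocLie C A Rel) (Set.range fun a : A => locMk C A Rel (of C a)) = ⊤ := by
  rw [Set.range_comp']
  exact lieSpan_image_mk_eq_top _ (FreeLieAlgebra.lieSpan_range_of_eq_top A)

theorem arrMk_lie_arrMk_eq_zero {x y : X} (h : ∀ A ∈ 𝒜, ¬({x, y} : Set X) ⊆ A) :
    ⁅arrMk C 𝒜 Rel (of C x), arrMk C 𝒜 Rel (of C y)⁆ = 0 :=
  (LieSubmodule.Quotient.mk_eq_zero' (N := definingIdeal C 𝒜 Rel)).2 <|
    LieSubmodule.subset_lieSpan (Or.inl ⟨x, y, h, rfl⟩)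

theorem lie_mem_derivedSeries_one {L : Type*} [LieRing L] [LieAlgebra C L] (u v : L) :
    ⁅u, v⁆ ∈ LieAlgebra.derivedSeries C L 1 := by
  rw [LieAlgebra.derivedSeries_def, LieAlgebra.derivedSeriesOfIdeal_succ,
    LieAlgebra.derivedSeriesOfIdeal_zero]
  exact LieSubmodule.lie_mem_lie (LieSubmodule.mem_top u) (LieSubmodule.mem_top v)

theorem lie_map_derivedSeries_eq_zero_of_replacementCond (hrep : ReplacementCond C 𝒜 Rel)
    (s : ∀ A : 𝒜, LocLie C (A : Set X) Rel →ₗ⁅C⁆ ArrLie C 𝒜 Rel)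
    (hs : ∀ (A : 𝒜) (a : (A : Set X)),
      s A (locMk C (A : Set X) Rel (of C a)) = arrMk C 𝒜 Rel (of C (a : X)))
    {A B : Set X} (hA : A ∈ 𝒜) (hB : B ∈ 𝒜) (hAB : A ≠ B) (hB3 : 3 ≤ B.ncard)
    {g : X} (hgA : g ∈ A) (hgB : g ∈ B) {c : ArrLie C 𝒜 Rel}
    (hc : ∀ b ∈ B, b ≠ g → ⁅c, arrMk C 𝒜 Rel (of C b)⁆ = 0)
    {w : LocLie C B Rel} (hw : w ∈ LieAlgebra.derivedSeries C (LocLie C B Rel) 1) :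
    ⁅c, s ⟨B, hB⟩ w⁆ = 0 := by
  refine lie_map_eq_zero_of_mem_lieSpan _ ?_ (hrep B hB hB3 g hgB ⟨A, hA, hAB, hgA⟩ hw)
  rintro _ ⟨b, hbg, rfl⟩
  rw [hs]
  exact hc b b.2 hbg

theorem lie_lie_map_derivedSeries_eq_zero (h𝒜 : IsSetArrangement 𝒜)
    (hrep : ReplacementCond C 𝒜 Rel)
    (htwo : ∀ A ∈ 𝒜, ∀ B ∈ 𝒜, A.ncard = 2 → B.ncard = 2 → A ≠ B → A ∩ B = ∅)
    (s : ∀ A : 𝒜, LocLie C (A : Set X) Rel →ₗ⁅C⁆ ArrLie C 𝒜 Rel)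
    (hs : ∀ (A : 𝒜) (a : (A : Set X)),
      s A (locMk C (A : Set X) Rel (of C a)) = arrMk C 𝒜 Rel (of C (a : X)))
    (h6 : ∀ A ∈ 𝒜, ∀ y ∈ A, ∀ z ∈ A, ∀ x : X, x ∉ A →
      ⁅arrMk C 𝒜 Rel (of C x), ⁅arrMk C 𝒜 Rel (of C y), arrMk C 𝒜 Rel (of C z)⁆⁆ = 0)
    {A : Set X} (hA : A ∈ 𝒜) {x g : X} (hx : x ∉ A) (hg : g ∈ A)
    {w : LocLie C A Rel} (hw : w ∈ LieAlgebra.derivedSeries C (LocLie C A Rel) 1)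
    (hcomm : ∀ b ∉ A, ⁅arrMk C 𝒜 Rel (of C b), s ⟨A, hA⟩ w⁆ = 0) :
    ⁅⁅arrMk C 𝒜 Rel (of C x), arrMk C 𝒜 Rel (of C g)⁆, s ⟨A, hA⟩ w⁆ = 0 := by
  by_cases hxg : ∃ B ∈ 𝒜, ({x, g} : Set X) ⊆ B
  swap
  · rw [arrMk_lie_arrMk_eq_zero fun B hB h => hxg ⟨B, hB, h⟩, zero_lie]
  obtain ⟨B, hB, hxgB⟩ := hxg
  have hxB : x ∈ B := hxgB (by simp)
  have hgB : g ∈ B := hxgB (by simp)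
  have hAB : A ≠ B := fun h => hx (h ▸ hxB)
  have hinter : ∀ y ∈ A, y ∈ B → y = g := fun y hyA hyB =>
    h𝒜.2.1 A hA B hB hAB ⟨hyA, hyB⟩ ⟨hg, hgB⟩
  rcases (h𝒜.1 B hB).eq_or_lt with hB2 | hB3
  · have hA3 : 3 ≤ A.ncard := by
      by_contra hA3
      have hA2 : A.ncard = 2 := by have := h𝒜.1 A hA; omega
      exact Set.notMem_empty g (htwo A hA B hB hA2 hB2.symm hAB ▸ ⟨hg, hgB⟩)
    refine lie_map_derivedSeries_eq_zero_of_replacementCond hrep s hs hB hA hAB.symm hA3 hgB hg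
      (fun a ha hag => ?_) hw
    rw [← lie_skew, h6 B hB x hxB g hgB a fun haB => hag (hinter a ha haB), neg_zero]
  · have hxg : ⁅arrMk C 𝒜 Rel (of C x), arrMk C 𝒜 Rel (of C g)⁆ =
        s ⟨B, hB⟩ ⁅locMk C B Rel (of C ⟨x, hxB⟩), locMk C B Rel (of C ⟨g, hgB⟩)⁆ := by
      rw [LieHom.map_lie, hs ⟨B, hB⟩, hs ⟨B, hB⟩]
    rw [hxg, ← lie_skew, lie_map_derivedSeries_eq_zero_of_replacementCond hrep s hs hA hB hAB hB3
      hg hgB (fun b hb hbg => ?_) (lie_mem_derivedSeries_one _ _), neg_zero]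
    rw [← lie_skew, hcomm b fun hbA => hbg (hinter b hbA hb), neg_zero]

theorem lie_arrMk_map_derivedSeries_eq_zero (h𝒜 : IsSetArrangement 𝒜)
    (hrep : ReplacementCond C 𝒜 Rel)
    (htwo : ∀ A ∈ 𝒜, ∀ B ∈ 𝒜, A.ncard = 2 → B.ncard = 2 → A ≠ B → A ∩ B = ∅)
    (s : ∀ A : 𝒜, LocLie C (A : Set X) Rel →ₗ⁅C⁆ ArrLie C 𝒜 Rel)
    (hs : ∀ (A : 𝒜) (a : (A : Set X)),
      s A (locMk C (A : Set X) Rel (of C a)) = arrMk C 𝒜 Rel (of C (a : X)))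
    (h6 : ∀ A ∈ 𝒜, ∀ y ∈ A, ∀ z ∈ A, ∀ x : X, x ∉ A →
      ⁅arrMk C 𝒜 Rel (of C x), ⁅arrMk C 𝒜 Rel (of C y), arrMk C 𝒜 Rel (of C z)⁆⁆ = 0)
    {A : Set X} (hA : A ∈ 𝒜) {x : X} (hx : x ∉ A)
    {w : LocLie C A Rel} (hw : w ∈ LieAlgebra.derivedSeries C (LocLie C A Rel) 1) :
    ⁅arrMk C 𝒜 Rel (of C x), s ⟨A, hA⟩ w⁆ = 0 := by
  let P : Submodule C (LocLie C A Rel) :=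
    (LieAlgebra.derivedSeries C (LocLie C A Rel) 1 : Submodule C (LocLie C A Rel)) ⊓
      ⨅ (b : X) (_ : b ∉ A), LinearMap.ker
        ((LieAlgebra.ad C (ArrLie C 𝒜 Rel) (arrMk C 𝒜 Rel (of C b))).comp
          (s ⟨A, hA⟩ : LocLie C A Rel →ₗ[C] ArrLie C 𝒜 Rel))
  have hP : ∀ v, v ∈ P ↔ v ∈ LieAlgebra.derivedSeries C (LocLie C A Rel) 1 ∧
      ∀ b ∉ A, ⁅arrMk C 𝒜 Rel (of C b), s ⟨A, hA⟩ v⁆ = 0 := by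
    intro v
    simp [P]
  refine ((hP w).1 (derivedSeries_one_le_of_lieSpan_eq_top (lieSpan_locMk_of_eq_top A)
    ?_ ?_ hw)).2 x hx
  · rintro _ ⟨g, rfl⟩ p hp
    obtain ⟨hpd, hpc⟩ := (hP p).1 hp
    refine (hP _).2 ⟨LieSubmodule.lie_mem _ hpd, fun b hb => ?_⟩
    rw [LieHom.map_lie, hs ⟨A, hA⟩, leibniz_lie, hpc b hb, lie_zero, add_zero,
      lie_lie_map_derivedSeries_eq_zero h𝒜 hrep htwo s hs h6 hA hb g.2 hpd hpc]
  · rintro _ ⟨g, rfl⟩ _ ⟨g', rfl⟩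
    refine (hP _).2 ⟨lie_mem_derivedSeries_one _ _, fun b hb => ?_⟩
    rw [LieHom.map_lie, hs ⟨A, hA⟩, hs ⟨A, hA⟩]
    exact h6 A hA g g.2 g' g'.2 b hb

end Arrangement

theorem statement9_general {C : Type*} [CommRing C] {X : Type*}
    (𝒜 : Set (Set X)) (Rel : ∀ A : Set X, Set (FreeLieAlgebra C A))
    (h𝒜 : IsSetArrangement 𝒜)
    (hrep : ReplacementCond C 𝒜 Rel)
    (htwo : ∀ A ∈ 𝒜, ∀ B ∈ 𝒜, A.ncard = 2 → B.ncard = 2 → A ≠ B → A ∩ B = ∅)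
    (s : ∀ A : 𝒜, LocLie C (A : Set X) Rel →ₗ⁅C⁆ ArrLie C 𝒜 Rel)
    (hs : ∀ (A : 𝒜) (a : (A : Set X)),
      s A (locMk C (A : Set X) Rel (of C a)) = arrMk C 𝒜 Rel (of C (a : X)))
    (h6 : ∀ A ∈ 𝒜, ∀ y ∈ A, ∀ z ∈ A, ∀ x : X, x ∉ A →
      ⁅arrMk C 𝒜 Rel (of C x), ⁅arrMk C 𝒜 Rel (of C y), arrMk C 𝒜 Rel (of C z)⁆⁆ = 0) :
    ∀ (A : 𝒜) (x : X), x ∉ (A : Set X) →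
      ∀ r ∈ s A ''
        (LieAlgebra.derivedSeries C (LocLie C (A : Set X) Rel) 1 : Set (LocLie C (A : Set X) Rel)),
        ⁅arrMk C 𝒜 Rel (of C x), r⁆ = 0 := by
  rintro ⟨A, hA⟩ x hx _ ⟨w, hw, rfl⟩
  exact lie_arrMk_map_derivedSeries_eq_zero h𝒜 hrep htwo s hs h6 hA hx hw

/-- Theorem 2.9(ii): if `L` satisfies the replacement condition, all two-element members of `𝒜`
are pairwise disjoint, for every `A ∈ 𝒜` there is at most one `B ∈ 𝒜` with `|B| = 2` and
`A ∩ B ≠ ∅`, and `⁅x, ⁅y, z⁆⁆ = 0` for all `A ∈ 𝒜`, `y, z ∈ A` and `x ∈ X \ A`, then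
`[x, im(s_A')] = 0` for all `A ∈ 𝒜` and `x ∈ X \ A`. -/
theorem statement9 {C : Type*} [CommRing C] {X : Type*} [Fintype X]
    (𝒜 : Set (Set X)) (Rel : ∀ A : Set X, Set (FreeLieAlgebra C A))
    (h𝒜 : IsSetArrangement 𝒜) (hRel : AdmissibleRel C 𝒜 Rel)
    (hrep : ReplacementCond C 𝒜 Rel)
    (htwo : ∀ A ∈ 𝒜, ∀ B ∈ 𝒜, A.ncard = 2 → B.ncard = 2 → A ≠ B → A ∩ B = ∅)
    (hone : ∀ A ∈ 𝒜, ∀ B₁ ∈ 𝒜, ∀ B₂ ∈ 𝒜, B₁.ncard = 2 → B₂.ncard = 2 →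
      (A ∩ B₁).Nonempty → (A ∩ B₂).Nonempty → B₁ = B₂)
    (s : ∀ A : 𝒜, LocLie C (A : Set X) Rel →ₗ⁅C⁆ ArrLie C 𝒜 Rel)
    (hs : ∀ (A : 𝒜) (a : (A : Set X)),
      s A (locMk C (A : Set X) Rel (of C a)) = arrMk C 𝒜 Rel (of C (a : X)))
    (h6 : ∀ A ∈ 𝒜, ∀ y ∈ A, ∀ z ∈ A, ∀ x : X, x ∉ A →
      ⁅arrMk C 𝒜 Rel (of C x), ⁅arrMk C 𝒜 Rel (of C y), arrMk C 𝒜 Rel (of C z)⁆⁆ = 0) :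
    ∀ (A : 𝒜) (x : X), x ∉ (A : Set X) →
      ∀ r ∈ s A ''
        (LieAlgebra.derivedSeries C (LocLie C (A : Set X) Rel) 1 : Set (LocLie C (A : Set X) Rel)),
        ⁅arrMk C 𝒜 Rel (of C x), r⁆ = 0 :=
  statement9_general 𝒜 Rel h𝒜 hrep htwo s hs h6
end

section
/- Let L be a Lie algebra of a set-arrangement 𝒜 on X and let ℬ be a closed sub-arrangement of 𝒜. The Lie algebra morphism from the free Lie algebra F(X) to L_ℬ sending each generator in supp(ℬ) to its class and every generator outside supp(ℬ) to zero annihilates the defining ideal of L, hence induces a Lie algebra morphism π_ℬ : L → L_ℬ with π_ℬ ∘ s_ℬ = id_{L_ℬ}. Consequently s_ℬ is injective, π_ℬ is surjective, and ker(π_ℬ) is the ideal of L generated by the images of the generators in X \ supp(ℬ). -/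
open FreeLieAlgebra

variable (C : Type*) [CommRing C] {X : Type*}

/-
The map `F(X) → L_ℬ` kills every defining relation of `L`. A bracket `⁅x, y⁆` of a pair lying in
no block either involves a generator outside `supp ℬ` or is itself a relation of `L_ℬ`; the
relations of a block `B ∈ ℬ` are relations of `L_ℬ`; and a block `A ∉ ℬ` meets `supp ℬ` in at
most one point, so its generators go to pairwise commuting elements and `R_A ⊆ [F(A), F(A)]`
goes to `0`. The induced `π_ℬ` satisfies `π_ℬ ∘ s_ℬ = id` on generators. Modulo the ideal `J`
generated by the generators outside `supp ℬ`, the quotient map `F(X) → L` and the composite of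
`F(X) → L_ℬ` with `s_ℬ` agree on generators, so every element of `ker π_ℬ` lies in `J`.
-/

namespace LieIdeal

variable {R L L' : Type*} [CommRing R] [LieRing L] [LieAlgebra R L] [LieRing L'] [LieAlgebra R L']

noncomputable def mkQ (I : LieIdeal R L) : L →ₗ⁅R⁆ L ⧸ I :=
  { (I : Submodule R L).mkQ with map_lie' := rfl }

@[simp]
theorem mkQ_apply (I : LieIdeal R L) (x : L) : mkQ I x = LieSubmodule.Quotient.mk x := rfl

noncomputable def liftQ (I : LieIdeal R L) (f : L →ₗ⁅R⁆ L') (h : I ≤ f.ker) :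
    L ⧸ I →ₗ⁅R⁆ L' :=
  { Submodule.liftQ I.toSubmodule f.toLinearMap fun _ hx => LieHom.mem_ker.mp (h hx) with
    map_lie' := fun {x y} => Quotient.inductionOn₂' x y f.map_lie }

end LieIdeal

theorem FreeLieAlgebra.hom_eq_zero_of_mem_derivedSeries_one {R Y L : Type*} [CommRing R]
    [LieRing L] [LieAlgebra R L] (ψ : FreeLieAlgebra R Y →ₗ⁅R⁆ L)
    (hcomm : ∀ a b : Y, ⁅ψ (of R a), ψ (of R b)⁆ = 0) {r : FreeLieAlgebra R Y}
    (hr : r ∈ LieAlgebra.derivedSeries R (FreeLieAlgebra R Y) 1) : ψ r = 0 := by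
  set K := LieSubalgebra.lieSpan R L (Set.range fun a => ψ (of R a))
  have : IsLieAbelian K := LieSubalgebra.isLieAbelian_lieSpan_iff.2 <| by
    rintro _ ⟨a, rfl⟩ _ ⟨b, rfl⟩
    exact hcomm a b
  set g : FreeLieAlgebra R Y →ₗ⁅R⁆ K :=
    lift R fun a => ⟨ψ (of R a), LieSubalgebra.subset_lieSpan ⟨a, rfl⟩⟩
  have hψ : ψ = K.incl.comp g := hom_ext fun a => by simp [g]
  have hg : g r ∈ LieAlgebra.derivedSeries R K 1 :=
    LieIdeal.derivedSeries_map_le 1 (LieIdeal.mem_map hr)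
  have hK : LieAlgebra.derivedSeries R K 1 = ⊥ := LieSubmodule.trivial_lie_oper_zero _ _
  rw [hK, LieSubmodule.mem_bot] at hg
  rw [hψ, LieHom.comp_apply, hg, map_zero]

variable {C} {𝒜 ℬ : Set (Set X)}
  {Rel : ∀ A : Set X, Set (FreeLieAlgebra C A)}

theorem mkQ_subIdeal_apply (w : FreeLieAlgebra C (arrSupp ℬ)) :
    LieIdeal.mkQ (subIdeal C ℬ Rel) w = subMk C ℬ Rel w :=
  rfl

theorem mkQ_definingIdeal_apply (w : FreeLieAlgebra C X) :
    LieIdeal.mkQ (definingIdeal C 𝒜 Rel) w = arrMk C 𝒜 Rel w :=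
  rfl

theorem subProj_of_mem {x : X} (hx : x ∈ arrSupp ℬ) :
    subProj C ℬ Rel (of C x) = subMk C ℬ Rel (of C ⟨x, hx⟩) := by
  simp [subProj, hx]

theorem subProj_of_notMem {x : X} (hx : x ∉ arrSupp ℬ) : subProj C ℬ Rel (of C x) = 0 := by
  simp [subProj, hx]

theorem subProj_lie_of_forall_not_subset {x y : X} (hℬ : ℬ ⊆ 𝒜)
    (hxy : ∀ A ∈ 𝒜, ¬({x, y} : Set X) ⊆ A) :
    subProj C ℬ Rel ⁅of C x, of C y⁆ = 0 := by
  rw [LieHom.map_lie]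
  by_cases hx : x ∈ arrSupp ℬ
  · by_cases hy : y ∈ arrSupp ℬ
    · rw [subProj_of_mem hx, subProj_of_mem hy, ← mkQ_subIdeal_apply, ← mkQ_subIdeal_apply,
        ← LieHom.map_lie, LieIdeal.mkQ_apply, LieSubmodule.Quotient.mk_eq_zero']
      exact LieSubmodule.subset_lieSpan <|
        Or.inr ⟨⟨x, hx⟩, ⟨y, hy⟩, fun B hB => hxy B (hℬ hB), rfl⟩
    · rw [subProj_of_notMem hy, lie_zero]
  · rw [subProj_of_notMem hx, zero_lie]

theorem subProj_comp_inclX_of_mem {B : Set X} (hB : B ∈ ℬ) :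
    (subProj C ℬ Rel).comp (inclX C B) =
      (LieIdeal.mkQ (subIdeal C ℬ Rel)).comp (inclSub C (Set.subset_sUnion_of_mem hB)) :=
  hom_ext fun b => by
    simp only [LieHom.comp_apply, inclX, inclSub, lift_of_apply,
      subProj_of_mem (Set.subset_sUnion_of_mem hB b.2), mkQ_subIdeal_apply]

theorem subProj_inclX_of_mem_rel {B : Set X} (hB : B ∈ ℬ) {r : FreeLieAlgebra C B}
    (hr : r ∈ Rel B) : subProj C ℬ Rel (inclX C B r) = 0 := by
  rw [← LieHom.comp_apply, subProj_comp_inclX_of_mem hB, LieHom.comp_apply, LieIdeal.mkQ_apply,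
    LieSubmodule.Quotient.mk_eq_zero']
  exact LieSubmodule.subset_lieSpan <| Or.inl <| Set.mem_iUnion₂_of_mem hB ⟨r, hr, rfl⟩

theorem subProj_inclX_of_mem_derivedSeries {A : Set X} (hA : (A ∩ arrSupp ℬ).Subsingleton)
    {r : FreeLieAlgebra C A} (hr : r ∈ LieAlgebra.derivedSeries C (FreeLieAlgebra C A) 1) :
    subProj C ℬ Rel (inclX C A r) = 0 := by
  refine FreeLieAlgebra.hom_eq_zero_of_mem_derivedSeries_one
    ((subProj C ℬ Rel).comp (inclX C A)) (fun a b => ?_) hr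
  -- at most one generator of `A` survives in `L_ℬ`, so their images commute
  simp only [LieHom.comp_apply, inclX, lift_of_apply]
  by_cases ha : (a : X) ∈ arrSupp ℬ
  · by_cases hb : (b : X) ∈ arrSupp ℬ
    · obtain rfl : a = b := Subtype.ext (hA ⟨a.2, ha⟩ ⟨b.2, hb⟩)
      exact lie_self _
    · rw [subProj_of_notMem hb, lie_zero]
  · rw [subProj_of_notMem ha, zero_lie]

theorem definingIdeal_le_ker_subProj (hℬ : IsClosedSub 𝒜 ℬ)
    (hRel : AdmissibleRel C 𝒜 Rel) :
    definingIdeal C 𝒜 Rel ≤ (subProj C ℬ Rel).ker := by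
  rw [definingIdeal, LieSubmodule.lieSpan_le]
  rintro z (⟨x, y, hxy, rfl⟩ | hz)
  · exact subProj_lie_of_forall_not_subset hℬ.1 hxy
  · simp only [Set.mem_iUnion] at hz
    obtain ⟨A, hA, r, hr, rfl⟩ := hz
    by_cases hAB : A ∈ ℬ
    · exact subProj_inclX_of_mem_rel hAB hr
    · exact subProj_inclX_of_mem_derivedSeries (hℬ.2 A hA hAB) (hRel A hA hr)

/-- The projection `π_ℬ : L → L_ℬ`. -/
noncomputable def arrProj (hℬ : IsClosedSub 𝒜 ℬ) (hRel : AdmissibleRel C 𝒜 Rel) :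
    ArrLie C 𝒜 Rel →ₗ⁅C⁆ SubLie C ℬ Rel :=
  LieIdeal.liftQ _ _ (definingIdeal_le_ker_subProj hℬ hRel)

theorem arrProj_arrMk (hℬ : IsClosedSub 𝒜 ℬ) (hRel : AdmissibleRel C 𝒜 Rel)
    (w : FreeLieAlgebra C X) : arrProj hℬ hRel (arrMk C 𝒜 Rel w) = subProj C ℬ Rel w :=
  rfl

variable (C 𝒜 ℬ Rel) in
noncomputable def suppComplIdeal : LieIdeal C (ArrLie C 𝒜 Rel) :=
  LieSubmodule.lieSpan C (ArrLie C 𝒜 Rel)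
    {z | ∃ x : X, x ∉ arrSupp ℬ ∧ z = arrMk C 𝒜 Rel (of C x)}

section

variable {sB : SubLie C ℬ Rel →ₗ⁅C⁆ ArrLie C 𝒜 Rel}
  (hsB : ∀ a : arrSupp ℬ, sB (subMk C ℬ Rel (of C a)) = arrMk C 𝒜 Rel (of C (a : X)))
include hsB

theorem arrMk_sub_subProj_mem_suppComplIdeal (w : FreeLieAlgebra C X) :
    arrMk C 𝒜 Rel w - sB (subProj C ℬ Rel w) ∈ suppComplIdeal C 𝒜 ℬ Rel := by
  set J := suppComplIdeal C 𝒜 ℬ Rel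
  have h : (LieIdeal.mkQ J).comp (LieIdeal.mkQ _) =
      (LieIdeal.mkQ J).comp (sB.comp (subProj C ℬ Rel)) := by
    refine hom_ext fun x => ?_
    simp only [LieHom.comp_apply, mkQ_definingIdeal_apply]
    by_cases hx : x ∈ arrSupp ℬ
    · rw [subProj_of_mem hx, hsB]
    · rw [subProj_of_notMem hx, map_zero, map_zero, LieIdeal.mkQ_apply,
        LieSubmodule.Quotient.mk_eq_zero']
      exact LieSubmodule.subset_lieSpan ⟨x, hx, rfl⟩
  rw [← LieSubmodule.Quotient.mk_eq_zero', ← LieIdeal.mkQ_apply, map_sub, sub_eq_zero]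
  exact LieHom.congr_fun h w

variable (hℬ : IsClosedSub 𝒜 ℬ) (hRel : AdmissibleRel C 𝒜 Rel)

theorem arrProj_leftInverse : Function.LeftInverse (arrProj hℬ hRel) sB := by
  have h : ((arrProj hℬ hRel).comp sB).comp (LieIdeal.mkQ _) =
      LieIdeal.mkQ (subIdeal C ℬ Rel) :=
    hom_ext fun a => by
      simp only [LieHom.comp_apply, mkQ_subIdeal_apply, hsB, arrProj_arrMk,
        subProj_of_mem a.2]
  intro z
  obtain ⟨w, rfl⟩ := LieSubmodule.Quotient.surjective_mk' _ z
  exact LieHom.congr_fun h w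

theorem ker_arrProj : (arrProj hℬ hRel).ker = suppComplIdeal C 𝒜 ℬ Rel := by
  refine le_antisymm (fun z hz => ?_) ?_
  · obtain ⟨w, rfl⟩ : ∃ w, arrMk C 𝒜 Rel w = z :=
      LieSubmodule.Quotient.surjective_mk' _ z
    have hw : subProj C ℬ Rel w = 0 := hz
    simpa only [hw, map_zero, sub_zero] using arrMk_sub_subProj_mem_suppComplIdeal hsB w
  · rw [suppComplIdeal, LieSubmodule.lieSpan_le]
    rintro _ ⟨x, hx, rfl⟩
    rw [SetLike.mem_coe, LieHom.mem_ker, arrProj_arrMk, subProj_of_notMem hx]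

end

theorem statement10_general {C : Type*} [CommRing C] {X : Type*}
    (𝒜 : Set (Set X)) (Rel : ∀ A : Set X, Set (FreeLieAlgebra C A))
    (hRel : AdmissibleRel C 𝒜 Rel)
    (ℬ : Set (Set X)) (hℬ : IsClosedSub 𝒜 ℬ)
    (sB : SubLie C ℬ Rel →ₗ⁅C⁆ ArrLie C 𝒜 Rel)
    (hsB : ∀ a : arrSupp ℬ, sB (subMk C ℬ Rel (of C a)) = arrMk C 𝒜 Rel (of C (a : X))) :
    (∀ z ∈ definingIdeal C 𝒜 Rel, subProj C ℬ Rel z = 0) ∧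
      ∃ πB : ArrLie C 𝒜 Rel →ₗ⁅C⁆ SubLie C ℬ Rel,
        (∀ w : FreeLieAlgebra C X, πB (arrMk C 𝒜 Rel w) = subProj C ℬ Rel w) ∧
        (∀ z : SubLie C ℬ Rel, πB (sB z) = z) ∧
        Function.Injective sB ∧ Function.Surjective πB ∧
        πB.ker = LieSubmodule.lieSpan C (ArrLie C 𝒜 Rel)
          {z | ∃ x : X, x ∉ arrSupp ℬ ∧ z = arrMk C 𝒜 Rel (of C x)} := by
  have hπ := arrProj_leftInverse hsB hℬ hRel
  exact ⟨fun z hz => LieHom.mem_ker.1 (definingIdeal_le_ker_subProj hℬ hRel hz),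
    arrProj hℬ hRel, arrProj_arrMk hℬ hRel, hπ, hπ.injective, hπ.surjective,
    ker_arrProj hsB hℬ hRel⟩

/-- For a closed sub-arrangement `ℬ` of `𝒜`, the morphism `F(X) → L_ℬ` killing the generators
outside `supp ℬ` annihilates the defining ideal of `L`, hence induces `π_ℬ : L → L_ℬ` with
`π_ℬ ∘ s_ℬ = id`; consequently `s_ℬ` is injective, `π_ℬ` is surjective, and `ker π_ℬ` is the
ideal of `L` generated by the images of the generators in `X \ supp ℬ`. -/
theorem statement10 {C : Type*} [CommRing C] {X : Type*} [Fintype X]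
    (𝒜 : Set (Set X)) (Rel : ∀ A : Set X, Set (FreeLieAlgebra C A))
    (h𝒜 : IsSetArrangement 𝒜) (hRel : AdmissibleRel C 𝒜 Rel)
    (ℬ : Set (Set X)) (hℬ : IsClosedSub 𝒜 ℬ)
    (sB : SubLie C ℬ Rel →ₗ⁅C⁆ ArrLie C 𝒜 Rel)
    (hsB : ∀ a : arrSupp ℬ, sB (subMk C ℬ Rel (of C a)) = arrMk C 𝒜 Rel (of C (a : X))) :
    (∀ z ∈ definingIdeal C 𝒜 Rel, subProj C ℬ Rel z = 0) ∧
      ∃ πB : ArrLie C 𝒜 Rel →ₗ⁅C⁆ SubLie C ℬ Rel,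
        (∀ w : FreeLieAlgebra C X, πB (arrMk C 𝒜 Rel w) = subProj C ℬ Rel w) ∧
        (∀ z : SubLie C ℬ Rel, πB (sB z) = z) ∧
        Function.Injective sB ∧ Function.Surjective πB ∧
        πB.ker = LieSubmodule.lieSpan C (ArrLie C 𝒜 Rel)
          {z | ∃ x : X, x ∉ arrSupp ℬ ∧ z = arrMk C 𝒜 Rel (of C x)} :=
  statement10_general 𝒜 Rel hRel ℬ hℬ sB hsB
end
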